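/- arXiv:2109.14281 — 9 statements merged into one kernel-verified Lean document; each statement's English description precedes it below -/
import Mathlib

section
/- Let Γ be a co-edge-regular graph with parameters (v,k,μ) such that k(k−1) − μ(v−k−1) = 0. Then any two adjacent vertices of Γ have no common neighbour; in particular, if Γ has at least one edge, then Γ is strongly regular with parameters (v,k,0,μ). -/
/-- A finite simple graph is co-edge-regular with parameters `(v, k, μ)` if it has exactly
`v` vertices, every vertex has exactly `k` neighbours, it is not a complete graph, and any
two distinct non-adjacent vertices have exactly `μ` common neighbours. -/
def IsCoEdgeRegular {V : Type*} (G : SimpleGraph V) (v k μ : ℕ) : Prop :=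
  Nat.card V = v ∧ (∀ x : V, (G.neighborSet x).ncard = k) ∧ G ≠ ⊤ ∧
    ∀ x y : V, x ≠ y → ¬ G.Adj x y → (G.commonNeighbors x y).ncard = μ

/-- A finite simple graph is edge-regular with parameters `(v, k, λ)` if it has exactly
`v` vertices, every vertex has exactly `k` neighbours, it has at least one edge, and any
two adjacent vertices have exactly `λ` common neighbours. -/
def IsEdgeRegular {V : Type*} (G : SimpleGraph V) (v k l : ℕ) : Prop :=
  Nat.card V = v ∧ (∀ x : V, (G.neighborSet x).ncard = k) ∧ (∃ x y : V, G.Adj x y) ∧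
    ∀ x y : V, G.Adj x y → (G.commonNeighbors x y).ncard = l

lemma key_zero {V : Type*} [Fintype V] [DecidableEq V] (G : SimpleGraph V)
    [DecidableRel G.Adj] (v k μ : ℕ) (h : IsCoEdgeRegular G v k μ)
    (h0 : (k : ℤ) * ((k : ℤ) - 1) - (μ : ℤ) * ((v : ℤ) - (k : ℤ) - 1) = 0)
    (x y : V) (hxy : G.Adj x y) : (G.commonNeighbors x y).ncard = 0 := by
  obtain ⟨hv, hk, -, hμ⟩ := h
  have hncard : ∀ a : V, (G.neighborFinset a).card = k := by
    intro a
    rw [SimpleGraph.neighborFinset_def, ← Set.ncard_eq_toFinset_card']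
    exact hk a
  set S := G.neighborFinset x with hS
  have hyS : y ∈ S := by simpa [hS] using hxy
  have hxS : x ∉ S := by simp [hS]
  have hk1 : 1 ≤ k := by
    rw [← hncard x]
    exact Finset.card_pos.mpr ⟨y, hyS⟩
  have hvcard : Fintype.card V = v := by rwa [← Nat.card_eq_fintype_card]
  have hins : (insert x S).card = k + 1 := by
    rw [Finset.card_insert_of_notMem hxS, hncard]
  have hkv : k + 1 ≤ v := by
    rw [← hins, ← hvcard]
    exact Finset.card_le_univ _
  -- convert h0 to a ℕ equation
  have hnk : k * (k - 1) = μ * (v - k - 1) := by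
    have h1 : ((k - 1 : ℕ) : ℤ) = (k : ℤ) - 1 := by omega
    have h2 : ((v - k - 1 : ℕ) : ℤ) = (v : ℤ) - (k : ℤ) - 1 := by omega
    have key : ((k * (k - 1) : ℕ) : ℤ) = ((μ * (v - k - 1) : ℕ) : ℤ) := by
      push_cast [h1, h2]
      linarith
    exact_mod_cast key
  set T := (Finset.univ : Finset V) \ insert x S with hT
  have hTcard : T.card = v - k - 1 := by
    rw [hT, Finset.card_sdiff_of_subset (Finset.subset_univ _), hins, Finset.card_univ, hvcard,
      Nat.sub_sub]
  have hsplit : ∀ a ∈ S, (k - 1) =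
      (G.neighborFinset a ∩ S).card + (G.neighborFinset a ∩ T).card := by
    intro a ha
    have hxa : x ∈ G.neighborFinset a := by
      rw [hS] at ha
      rw [SimpleGraph.mem_neighborFinset] at ha ⊢
      exact ha.symm
    have hcard : (G.neighborFinset a \ {x}).card = k - 1 := by
      rw [Finset.card_sdiff_of_subset (by simpa using hxa), hncard, Finset.card_singleton]
    rw [← hcard, ← Finset.card_union_of_disjoint]
    · congr 1
      ext z
      simp only [Finset.mem_sdiff, Finset.mem_singleton, Finset.mem_union, Finset.mem_inter,
        hT, Finset.mem_univ, true_and, Finset.mem_insert]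
      constructor
      · rintro ⟨hz, hzx⟩
        by_cases hzS : z ∈ S
        · exact Or.inl ⟨hz, hzS⟩
        · exact Or.inr ⟨hz, by tauto⟩
      · rintro (⟨hz, hzS⟩ | ⟨hz, hzm⟩)
        · exact ⟨hz, fun e => hxS (e ▸ hzS)⟩
        · exact ⟨hz, fun e => hzm (Or.inl e)⟩
    · apply Finset.disjoint_left.mpr
      intro z hz hzT
      rw [Finset.mem_inter] at hz
      obtain ⟨-, hzS⟩ := hz
      simp only [Finset.mem_inter, hT, Finset.mem_sdiff, Finset.mem_insert] at hzT
      exact hzT.2.2 (Or.inr hzS)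
  have e1 : ∀ (a : V) (W : Finset V), (G.neighborFinset a ∩ W).card
      = ∑ z ∈ W, if G.Adj a z then 1 else 0 := by
    intro a W
    rw [← Finset.card_filter]
    congr 1
    ext z
    simp [SimpleGraph.mem_neighborFinset, and_comm]
  have hswap : ∑ a ∈ S, (G.neighborFinset a ∩ T).card
      = ∑ z ∈ T, (G.neighborFinset z ∩ S).card := by
    simp only [e1]
    rw [Finset.sum_comm]
    apply Finset.sum_congr rfl
    intro z _
    apply Finset.sum_congr rfl
    intro a _
    simp [SimpleGraph.adj_comm]
  have hμT : ∀ z ∈ T, (G.neighborFinset z ∩ S).card = μ := by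
    intro z hz
    rw [hT, Finset.mem_sdiff, Finset.mem_insert] at hz
    push_neg at hz
    obtain ⟨-, hzx, hzS⟩ := hz
    have hnadj : ¬ G.Adj x z := by
      intro hc
      exact hzS (by rwa [hS, SimpleGraph.mem_neighborFinset])
    have := hμ x z (Ne.symm hzx) hnadj
    rw [← this, SimpleGraph.commonNeighbors, Set.ncard_eq_toFinset_card']
    congr 1
    ext w
    simp only [Set.mem_toFinset, Set.mem_inter_iff, SimpleGraph.mem_neighborSet,
      Finset.mem_inter, SimpleGraph.mem_neighborFinset, hS]
    tauto
  have htotal : k * (k - 1)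
      = (∑ a ∈ S, (G.neighborFinset a ∩ S).card) + μ * (v - k - 1) := by
    calc k * (k - 1) = ∑ _a ∈ S, (k - 1) := by
          rw [Finset.sum_const, hncard, smul_eq_mul]
      _ = ∑ a ∈ S, ((G.neighborFinset a ∩ S).card + (G.neighborFinset a ∩ T).card) :=
          Finset.sum_congr rfl hsplit
      _ = (∑ a ∈ S, (G.neighborFinset a ∩ S).card)
            + ∑ a ∈ S, (G.neighborFinset a ∩ T).card := Finset.sum_add_distrib
      _ = (∑ a ∈ S, (G.neighborFinset a ∩ S).card) + μ * (v - k - 1) := by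
          rw [hswap, Finset.sum_congr rfl hμT, Finset.sum_const, hTcard, smul_eq_mul,
            Nat.mul_comm]
  have hzero : ∑ a ∈ S, (G.neighborFinset a ∩ S).card = 0 := by omega
  have hy0 : (G.neighborFinset y ∩ S).card = 0 := by
    have := Finset.sum_eq_zero_iff.mp hzero
    exact this y hyS
  rw [SimpleGraph.commonNeighbors, Set.ncard_eq_toFinset_card']
  rw [← hy0]
  congr 1
  ext w
  simp only [Set.mem_toFinset, Set.mem_inter_iff, SimpleGraph.mem_neighborSet,
    Finset.mem_inter, SimpleGraph.mem_neighborFinset, hS]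
  tauto

/-- If `Γ` is a co-edge-regular graph with parameters `(v, k, μ)` satisfying
`k(k-1) - μ(v-k-1) = 0`, then any two adjacent vertices of `Γ` have no common neighbour;
in particular, if `Γ` has at least one edge, then `Γ` is strongly regular with
parameters `(v, k, 0, μ)`. -/
theorem coEdgeRegular_eq_zero {V : Type*} [Fintype V] (G : SimpleGraph V) (v k μ : ℕ)
    (h : IsCoEdgeRegular G v k μ)
    (h0 : (k : ℤ) * ((k : ℤ) - 1) - (μ : ℤ) * ((v : ℤ) - (k : ℤ) - 1) = 0) :
    (∀ x y : V, G.Adj x y → (G.commonNeighbors x y).ncard = 0) ∧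
      ((∃ x y : V, G.Adj x y) → IsEdgeRegular G v k 0 ∧ IsCoEdgeRegular G v k μ) := by
  classical
  have main := key_zero G v k μ h h0
  refine ⟨main, fun he => ⟨⟨h.1, h.2.1, he, fun x y hxy => main x y hxy⟩, h⟩⟩
end

section
/- Let Γ be a co-edge-regular graph with parameters (v,k,μ) such that k(k−1) − μ(v−k−1) = 2. Then every vertex of Γ is contained in exactly one triangle (a set of three pairwise adjacent vertices). -/
/-- If `Γ` is a co-edge-regular graph with parameters `(v, k, μ)` satisfying
`k(k-1) - μ(v-k-1) = 2`, then every vertex of `Γ` is contained in exactly one triangle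
(a set of three pairwise adjacent vertices). -/
theorem coEdgeRegular_eq_two_unique_triangle {V : Type*} [Fintype V] (G : SimpleGraph V)
    (v k μ : ℕ) (h : IsCoEdgeRegular G v k μ)
    (h2 : (k : ℤ) * ((k : ℤ) - 1) - (μ : ℤ) * ((v : ℤ) - (k : ℤ) - 1) = 2) :
    ∀ u : V, ∃! T : Finset V, G.IsNClique 3 T ∧ u ∈ T := by
  classical
  obtain ⟨hv, hk, -, hμ⟩ := h
  have hv' : Fintype.card V = v := by rwa [Nat.card_eq_fintype_card] at hv
  have hk' : ∀ x : V, (G.neighborFinset x).card = k := by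
    intro x
    have := hk x
    rwa [Set.ncard_eq_toFinset_card'] at this
  intro u
  set N : Finset V := G.neighborFinset u with hN
  have hNcard : N.card = k := hk' u
  have huN : u ∉ N := by simp [hN]
  set M : Finset V := Finset.univ \ insert u N with hM
  have hkv : k + 1 ≤ v := by
    rw [← hv', ← hNcard]
    calc N.card + 1 = (insert u N).card := (Finset.card_insert_of_notMem huN).symm
      _ ≤ Fintype.card V := Finset.card_le_univ _
  have hMcard : M.card = v - (k + 1) := by
    rw [hM, Finset.card_sdiff_of_subset (Finset.subset_univ _), Finset.card_insert_of_notMem huN,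
      hNcard, Finset.card_univ, hv']
  -- per-vertex counting
  have key : ∀ x ∈ N, ((N.filter (fun y => G.Adj x y)).card
      + (M.filter (fun y => G.Adj x y)).card) = k - 1 := by
    intro x hx
    have hadj : G.Adj u x := by simpa [hN] using hx
    have hNM : Disjoint N M := Finset.disjoint_left.2 fun y hyN hyM =>
      (Finset.mem_sdiff.1 hyM).2 (Finset.mem_insert_of_mem hyN)
    have hdisj : Disjoint (N.filter (fun y => G.Adj x y)) (M.filter (fun y => G.Adj x y)) :=
      Finset.disjoint_filter_filter hNM
    rw [← Finset.card_union_of_disjoint hdisj]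
    have hun : N.filter (fun y => G.Adj x y) ∪ M.filter (fun y => G.Adj x y)
        = (G.neighborFinset x).erase u := by
      ext y
      simp only [Finset.mem_union, Finset.mem_filter, hM, Finset.mem_sdiff, Finset.mem_univ,
        Finset.mem_insert, true_and, Finset.mem_erase, SimpleGraph.mem_neighborFinset, not_or]
      constructor
      · rintro (⟨hyN, hxy⟩ | ⟨⟨hyu, _⟩, hxy⟩)
        · exact ⟨fun hyu => huN (hyu ▸ hyN), hxy⟩
        · exact ⟨hyu, hxy⟩
      · rintro ⟨hyu, hxy⟩
        by_cases hyN : y ∈ N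
        · exact Or.inl ⟨hyN, hxy⟩
        · exact Or.inr ⟨⟨hyu, hyN⟩, hxy⟩
    rw [hun, Finset.card_erase_of_mem (by simpa using hadj.symm), hk' x]
  have sum1 : (∑ x ∈ N, (N.filter (fun y => G.Adj x y)).card)
      + ∑ x ∈ N, (M.filter (fun y => G.Adj x y)).card = k * (k - 1) := by
    rw [← Finset.sum_add_distrib, Finset.sum_congr rfl key, Finset.sum_const, hNcard,
      smul_eq_mul]
  have swap : ∑ x ∈ N, (M.filter (fun y => G.Adj x y)).card
      = ∑ y ∈ M, (N.filter (fun x => G.Adj x y)).card := by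
    simp_rw [Finset.card_filter]
    exact Finset.sum_comm
  have hMval : ∀ y ∈ M, (N.filter (fun x => G.Adj x y)).card = μ := by
    intro y hy
    rw [hM, Finset.mem_sdiff, Finset.mem_insert] at hy
    push_neg at hy
    obtain ⟨-, hyu, hyN⟩ := hy
    have hnadj : ¬ G.Adj u y := by simpa [hN] using hyN
    have hfe : N.filter (fun x => G.Adj x y) = (G.commonNeighbors u y).toFinset := by
      ext x
      simp only [Finset.mem_filter, Set.mem_toFinset, SimpleGraph.mem_commonNeighbors, hN,
        SimpleGraph.mem_neighborFinset, SimpleGraph.mem_neighborSet]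
      exact ⟨fun ⟨h1, h2⟩ => ⟨h1, h2.symm⟩, fun ⟨h1, h2⟩ => ⟨h1, h2.symm⟩⟩
    rw [hfe, ← Set.ncard_eq_toFinset_card']
    exact hμ u y (fun huy => hyu (huy.symm)) hnadj
  have sum2 : ∑ x ∈ N, (M.filter (fun y => G.Adj x y)).card = (v - (k + 1)) * μ := by
    rw [swap, Finset.sum_congr rfl hMval, Finset.sum_const, hMcard, smul_eq_mul]
  -- k ≥ 2
  have hk2 : 2 ≤ k := by
    by_contra hcon
    push_neg at hcon
    have hk1 : (k : ℤ) ≤ 1 := by exact_mod_cast Nat.lt_succ_iff.mp hcon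
    have hk0 : (0 : ℤ) ≤ k := Int.natCast_nonneg k
    have hvk : (0 : ℤ) ≤ (v : ℤ) - k - 1 := by
      have : ((k : ℤ) + 1) ≤ v := by exact_mod_cast hkv
      linarith
    have hμ0 : (0 : ℤ) ≤ μ := Int.natCast_nonneg μ
    nlinarith [mul_nonneg hμ0 hvk, mul_nonneg hk0 (by linarith : (0:ℤ) ≤ 1 - (k:ℤ))]
  -- the edge count inside N
  set Qc : ℕ := ∑ x ∈ N, (N.filter (fun y => G.Adj x y)).card with hQc
  have hQc2 : Qc = 2 := by
    have hmain : (Qc : ℤ) + ((v : ℤ) - (k : ℤ) - 1) * μ = (k : ℤ) * ((k : ℤ) - 1) := by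
      rw [sum2] at sum1
      have hcast := congrArg (fun n : ℕ => (n : ℤ)) sum1
      simp only [Nat.cast_add, Nat.cast_mul, Nat.cast_sub hkv,
        Nat.cast_sub (by omega : 1 ≤ k)] at hcast
      push_cast at hcast
      linarith
    have : (Qc : ℤ) = 2 := by linarith
    exact_mod_cast this
  -- Q : ordered adjacent pairs in N
  set Q : Finset (V × V) := (N ×ˢ N).filter (fun p => G.Adj p.1 p.2) with hQ
  have hQcard : Q.card = Qc := by
    rw [hQc]
    rw [Finset.card_eq_sum_card_fiberwise
      (f := Prod.fst) (t := N)
      (fun p hp => (Finset.mem_product.1 (Finset.mem_filter.1 hp).1).1)]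
    refine Finset.sum_congr rfl fun x hx => ?_
    have himg : Q.filter (fun p => p.1 = x)
        = (N.filter (fun y => G.Adj x y)).image (fun y => (x, y)) := by
      ext ⟨p1, p2⟩
      simp only [hQ, Finset.mem_filter, Finset.mem_product, Finset.mem_image]
      constructor
      · rintro ⟨⟨⟨h1, h2⟩, h3⟩, rfl⟩
        exact ⟨p2, ⟨h2, h3⟩, rfl⟩
      · rintro ⟨y, ⟨hy1, hy2⟩, heq⟩
        obtain ⟨rfl, rfl⟩ := Prod.mk.injEq .. ▸ heq
        exact ⟨⟨⟨hx, hy1⟩, hy2⟩, rfl⟩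
    rw [himg, Finset.card_image_of_injective _ (fun a b hab => by
      simpa using congrArg Prod.snd hab)]
  have hQ2 : Q.card = 2 := hQcard.trans hQc2
  obtain ⟨p, q, hpq, hQeq⟩ := Finset.card_eq_two.1 hQ2
  obtain ⟨a, b⟩ := p
  have hpQ : (a, b) ∈ Q := by rw [hQeq]; simp
  obtain ⟨⟨haN, hbN⟩, hab⟩ : (a ∈ N ∧ b ∈ N) ∧ G.Adj a b := by
    have := Finset.mem_filter.1 hpQ
    exact ⟨Finset.mem_product.1 this.1, this.2⟩
  have hbaQ : (b, a) ∈ Q := by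
    rw [hQ]
    exact Finset.mem_filter.2 ⟨Finset.mem_product.2 ⟨hbN, haN⟩, hab.symm⟩
  have hqeq : q = (b, a) := by
    rw [hQeq] at hbaQ
    rcases Finset.mem_insert.1 hbaQ with hcase | hcase
    · obtain ⟨h1, h2⟩ := Prod.ext_iff.1 hcase
      exact absurd (show b = a from h1) hab.ne'
    · exact (Finset.mem_singleton.1 hcase).symm
  have hmemQ : ∀ x y : V, x ∈ N → y ∈ N → G.Adj x y → (x = a ∧ y = b) ∨ (x = b ∧ y = a) := by
    intro x y hx hy hxy
    have hxyQ : (x, y) ∈ Q := Finset.mem_filter.2 ⟨Finset.mem_product.2 ⟨hx, hy⟩, hxy⟩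
    rw [hQeq, hqeq] at hxyQ
    rcases Finset.mem_insert.1 hxyQ with hcase | hcase
    · left
      have := Prod.ext_iff.1 hcase
      exact ⟨this.1, this.2⟩
    · right
      have := Prod.ext_iff.1 (Finset.mem_singleton.1 hcase)
      exact ⟨this.1, this.2⟩
  have hua : G.Adj u a := by simpa [hN] using haN
  have hub : G.Adj u b := by simpa [hN] using hbN
  have hmem' : ∀ x y : V, G.Adj u x → G.Adj u y → G.Adj x y →
      (x = a ∧ y = b) ∨ (x = b ∧ y = a) := fun x y hx hy hxy =>
    hmemQ x y (by simpa [hN] using hx) (by simpa [hN] using hy) hxy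
  clear_value N M Q Qc
  clear hmemQ hQeq hbaQ hpQ hqeq hQ2 hQcard hQc2 hQc hQ sum1 sum2 swap hMval key hMcard hM
    hN huN hNcard hkv hk' hμ hk hv hv' haN hbN hpq hk2 h2 q Qc Q M N
  refine ⟨{u, a, b}, ⟨SimpleGraph.is3Clique_triple_iff.2 ⟨hua, hub, hab⟩, by simp⟩, ?_⟩
  rintro T' ⟨hT', huT'⟩
  obtain ⟨x, y, z, hxy, hxz, hyz, rfl⟩ := SimpleGraph.is3Clique_iff.1 hT'
  simp only [Finset.mem_insert, Finset.mem_singleton] at huT'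
  rcases huT' with rfl | rfl | rfl
  · -- u = x
    rcases hmem' y z hxy hxz hyz with ⟨rfl, rfl⟩ | ⟨rfl, rfl⟩
    · rfl
    · ext w; simp; tauto
  · -- u = y
    rcases hmem' x z hxy.symm hyz hxz with ⟨rfl, rfl⟩ | ⟨rfl, rfl⟩
    · ext w; simp; tauto
    · ext w; simp; tauto
  · -- u = z
    rcases hmem' x y hxz.symm hyz.symm hxy with ⟨rfl, rfl⟩ | ⟨rfl, rfl⟩
    · ext w; simp; tauto
    · ext w; simp; tauto
end

section
/- Let Γ be an edge-regular graph with parameters (v,k,λ). Then (v−k−1)(v−k−2) − k(v−2k+λ) ≥ 0. In particular, there is no edge-regular graph (and hence no Neumaier graph) with parameters (v,k,λ) satisfying (v−k−1)(v−k−2) − k(v−2k+λ) < 0. -/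
/-!
Fix a vertex `x`, let `A` be its `k` neighbours and `B` the `b = v - k - 1` vertices at distance
at least two from `x`. Each `y ∈ A` is adjacent to `x` and to `λ` vertices of `A`, so it has exactly
`k - 1 - λ` neighbours in `B`; each `z ∈ B` has at most `b - 1` neighbours in `B`, hence at least
`k - b + 1` in `A`. Counting the edges between `A` and `B` both ways gives
`b (k - b + 1) ≤ k (k - 1 - λ)`, which is the inequality.
-/

open Finset

namespace SimpleGraph

variable {V : Type*} (G : SimpleGraph V)

section Finset

variable [DecidableRel G.Adj]

lemma card_filter_adj_lt_card {s : Finset V} {z : V} (hz : z ∈ s) : #{y ∈ s | G.Adj z y} < #s :=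
  card_lt_card <| filter_ssubset.2 ⟨z, hz, G.irrefl⟩

lemma sum_card_filter_adj_comm (s t : Finset V) :
    ∑ z ∈ s, #{y ∈ t | G.Adj z y} = ∑ y ∈ t, #{z ∈ s | G.Adj y z} :=
  (sum_card_bipartiteAbove_eq_sum_card_bipartiteBelow G.Adj).trans <| by
    simp only [bipartiteBelow, G.adj_comm]

variable [Fintype V] [DecidableEq V]

lemma card_filter_adj_add_card_compl_filter_adj (s : Finset V) (z : V) :
    #{y ∈ s | G.Adj z y} + #{y ∈ sᶜ | G.Adj z y} = G.degree z := by
  rw [← card_neighborFinset_eq_degree, neighborFinset_eq_filter, ← card_union_of_disjoint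
    (disjoint_filter_filter disjoint_compl_right), ← filter_union, union_compl]

variable {G} in
theorem IsRegularOfDegree.mul_le_card_compl_insert_neighborFinset {k l : ℕ}
    (hreg : G.IsRegularOfDegree k) (x : V)
    (hl : ∀ y, G.Adj x y → #{z ∈ G.neighborFinset x | G.Adj y z} = l) :
    (k : ℤ) * (#(insert x (G.neighborFinset x))ᶜ - k + 1 + l) ≤
      #(insert x (G.neighborFinset x))ᶜ * (#(insert x (G.neighborFinset x))ᶜ - 1) := by
  set A := G.neighborFinset x
  set B := (insert x A)ᶜ
  have hxA : x ∉ A := G.notMem_neighborFinset_self x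
  have hA : ∀ y ∈ A, #{z ∈ B | G.Adj y z} + (l + 1) = k := by
    intro y hy
    have hxy : G.Adj x y := (G.mem_neighborFinset x y).1 hy
    rw [← hreg y, ← G.card_filter_adj_add_card_compl_filter_adj B y, compl_compl,
      filter_insert, if_pos hxy.symm, card_insert_of_notMem (fun h ↦ hxA (mem_filter.1 h).1),
      hl y hxy]
  have hB : ∀ z ∈ B, #{y ∈ A | G.Adj z y} + #{y ∈ B | G.Adj z y} = k := by
    intro z hz
    have hzx : ¬ G.Adj z x := fun h ↦ by simp [B, A, h.symm] at hz
    rw [← hreg z, ← G.card_filter_adj_add_card_compl_filter_adj B z, compl_compl,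
      filter_insert, if_neg hzx, add_comm]
  have hAsum : ∑ y ∈ A, #{z ∈ B | G.Adj y z} + #A * (l + 1) = #A * k := by
    rw [← smul_eq_mul, ← sum_const, ← sum_add_distrib, sum_congr rfl hA, sum_const, smul_eq_mul]
  have hBsum : ∑ y ∈ A, #{z ∈ B | G.Adj y z} + ∑ z ∈ B, #{y ∈ B | G.Adj z y} = #B * k := by
    rw [← G.sum_card_filter_adj_comm, ← sum_add_distrib, sum_congr rfl hB, sum_const, smul_eq_mul]
  have hBle : ∑ z ∈ B, #{y ∈ B | G.Adj z y} + #B ≤ #B * #B :=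
    calc ∑ z ∈ B, #{y ∈ B | G.Adj z y} + #B = ∑ z ∈ B, (#{y ∈ B | G.Adj z y} + 1) := by
          rw [sum_add_distrib, card_eq_sum_ones]
      _ ≤ ∑ _z ∈ B, #B := sum_le_sum fun z hz ↦ G.card_filter_adj_lt_card hz
      _ = #B * #B := by rw [sum_const, smul_eq_mul]
  rw [show #A = k from hreg x] at hAsum
  linarith

end Finset

lemma ncard_neighborSet_eq_degree [Fintype V] [DecidableRel G.Adj] (x : V) :
    (G.neighborSet x).ncard = G.degree x :=
  Set.ncard_eq_toFinset_card' _

lemma ncard_commonNeighbors_eq_card_filter [Fintype V] [DecidableRel G.Adj] (x y : V) :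
    (G.commonNeighbors x y).ncard = #{z ∈ G.neighborFinset x | G.Adj y z} := by
  rw [Set.ncard_eq_toFinset_card']
  congr 1
  ext z
  simp [mem_commonNeighbors]

end SimpleGraph

/-- If `Γ` is an edge-regular graph with parameters `(v, k, λ)`, then
`(v-k-1)(v-k-2) - k(v-2k+λ) ≥ 0`.  In particular, there is no edge-regular graph (and
hence no Neumaier graph) with parameters `(v, k, λ)` satisfying
`(v-k-1)(v-k-2) - k(v-2k+λ) < 0`. -/
theorem edgeRegular_ineq {V : Type*} [Fintype V] (G : SimpleGraph V) (v k l : ℕ)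
    (h : IsEdgeRegular G v k l) :
    0 ≤ ((v : ℤ) - k - 1) * ((v : ℤ) - k - 2) - (k : ℤ) * ((v : ℤ) - 2 * k + l) := by
  classical
  obtain ⟨hv, hk, ⟨x, -, -⟩, hl⟩ := h
  have hreg : G.IsRegularOfDegree k := fun y ↦ (G.ncard_neighborSet_eq_degree y).symm.trans (hk y)
  have key := hreg.mul_le_card_compl_insert_neighborFinset x fun y hxy ↦
    (G.ncard_commonNeighbors_eq_card_filter x y).symm.trans (hl x y hxy)
  have hcard : #(insert x (G.neighborFinset x))ᶜ + (k + 1) = v := by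
    rw [add_comm, ← hreg x, ← SimpleGraph.card_neighborFinset_eq_degree,
      ← card_insert_of_notMem (G.notMem_neighborFinset_self x), card_add_card_compl,
      ← Nat.card_eq_fintype_card, hv]
  have hcard' : (#(insert x (G.neighborFinset x))ᶜ : ℤ) = v - k - 1 := by
    rw [← hcard]; push_cast; ring
  rw [hcard'] at key
  linarith
end

section
/- Let Γ be a non-complete edge-regular graph with parameters (v,k,λ) such that (v−k−1)(v−k−2) − k(v−2k+λ) = 0. Then Γ is strongly regular, i.e., there exists an integer μ such that Γ is co-edge-regular with parameters (v,k,μ). -/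
/-!
Fix non-adjacent vertices `x ≠ y` and let `B` be the set of the `v - k - 1` vertices other
than `x` not adjacent to `x`. Each neighbour `z` of `x` has exactly `k - λ - 1` neighbours in `B`
(the others are `x` and the `λ` common neighbours of `x` and `z`), so double counting the edges
between `N(x)` and `B` gives `∑_{w ∈ B} |N(x) ∩ N(w)| = k (k - λ - 1)`. Since `N(x) ∪ N(w)` avoids
`x` and `w`, every term is at least `2k + 2 - v`, and the hypothesis says precisely that
`k (k - λ - 1) = (v - k - 1)(2k + 2 - v)`. Hence every term, in particular `|N(x) ∩ N(y)|`,
equals `2k + 2 - v`.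
-/

namespace SimpleGraph

open Finset

variable {V : Type*} [Fintype V] [DecidableEq V] {G : SimpleGraph V} [DecidableRel G.Adj]
  {x y z w : V}

omit [DecidableEq V] in
lemma ncard_neighborSet (x : V) : (G.neighborSet x).ncard = G.degree x := by
  rw [← Nat.card_coe_set_eq, Nat.card_eq_fintype_card, card_neighborSet_eq_degree]

lemma ncard_commonNeighbors (x y : V) :
    (G.commonNeighbors x y).ncard = #(G.neighborFinset x ∩ G.neighborFinset y) := by
  rw [Set.ncard_eq_toFinset_card']
  congr 1
  ext
  simp [mem_commonNeighbors]

lemma sum_card_inter_neighborFinset_comm (s t : Finset V) :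
    ∑ w ∈ t, #(s ∩ G.neighborFinset w) = ∑ z ∈ s, #(t ∩ G.neighborFinset z) := by
  have below (w : V) : s ∩ G.neighborFinset w = bipartiteBelow G.Adj s w := by
    ext; simp [bipartiteBelow, G.adj_comm w]
  have above (z : V) : t ∩ G.neighborFinset z = bipartiteAbove G.Adj t z := by
    ext; simp [bipartiteAbove]
  simp only [below, above]
  exact (sum_card_bipartiteAbove_eq_sum_card_bipartiteBelow G.Adj).symm

lemma Adj.card_compl_inter_add_card_inter_add_one (hxz : G.Adj x z) :
    #(Gᶜ.neighborFinset x ∩ G.neighborFinset z) + #(G.neighborFinset x ∩ G.neighborFinset z) + 1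
      = G.degree z := by
  have hcompl : Gᶜ.neighborFinset x ∩ G.neighborFinset z
      = G.neighborFinset z \ insert x (G.neighborFinset x) := by
    ext
    simp only [neighborFinset_compl, mem_inter, mem_sdiff, mem_compl, mem_neighborFinset,
      mem_singleton, mem_insert, not_or]
    tauto
  rw [← card_neighborFinset_eq_degree,
    ← card_sdiff_add_card_inter (G.neighborFinset z) (insert x (G.neighborFinset x)),
    inter_insert_of_mem (by simpa using hxz.symm), card_insert_of_notMem (by simp), hcompl,
    inter_comm, add_assoc]

lemma degree_add_degree_add_two_le_card_inter_add_card (hxw : Gᶜ.Adj x w) :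
    G.degree x + G.degree w + 2 ≤ #(G.neighborFinset x ∩ G.neighborFinset w) + Fintype.card V := by
  have hsub : G.neighborFinset x ∪ G.neighborFinset w ⊆ ({x, w} : Finset V)ᶜ := by
    intro u
    simp only [mem_union, mem_neighborFinset, mem_compl, mem_insert, mem_singleton]
    rintro (hu | hu) (rfl | rfl)
    exacts [G.irrefl hu, hxw.2 hu, hxw.2 hu.symm, G.irrefl hu]
  have hunion := card_le_card hsub
  rw [card_compl, card_pair hxw.ne] at hunion
  have htwo : 2 ≤ Fintype.card V := card_pair hxw.ne ▸ card_le_univ _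
  have := card_union_add_card_inter (G.neighborFinset x) (G.neighborFinset w)
  simp only [card_neighborFinset_eq_degree] at this
  omega

variable {k l : ℕ}

lemma sum_card_inter_neighborFinset_compl (hreg : G.IsRegularOfDegree k)
    (hl : ∀ x z, G.Adj x z → #(G.neighborFinset x ∩ G.neighborFinset z) = l) (x : V) :
    ∑ w ∈ Gᶜ.neighborFinset x, #(G.neighborFinset x ∩ G.neighborFinset w) + k * (l + 1)
      = k * k := by
  calc _ = ∑ z ∈ G.neighborFinset x, (#(Gᶜ.neighborFinset x ∩ G.neighborFinset z) + (l + 1)) := by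
        rw [sum_card_inter_neighborFinset_comm, sum_add_distrib, sum_const,
          card_neighborFinset_eq_degree, hreg.degree_eq, smul_eq_mul]
    _ = ∑ z ∈ G.neighborFinset x, k := sum_congr rfl fun z hz ↦ by
        have hxz : G.Adj x z := by simpa using hz
        rw [← hl x z hxz, ← add_assoc, hxz.card_compl_inter_add_card_inter_add_one, hreg.degree_eq]
    _ = k * k := by rw [sum_const, card_neighborFinset_eq_degree, hreg.degree_eq, smul_eq_mul]

lemma card_inter_neighborFinset_add_card_eq_of_compl_adj (hreg : G.IsRegularOfDegree k)
    (hl : ∀ x z, G.Adj x z → #(G.neighborFinset x ∩ G.neighborFinset z) = l)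
    (h0 : ((Fintype.card V : ℤ) - k - 1) * ((Fintype.card V : ℤ) - k - 2)
      - (k : ℤ) * ((Fintype.card V : ℤ) - 2 * k + l) = 0)
    (hxy : Gᶜ.Adj x y) :
    #(G.neighborFinset x ∩ G.neighborFinset y) + Fintype.card V = 2 * k + 2 := by
  set n := Fintype.card V
  have hcompl : #(Gᶜ.neighborFinset x) + k + 1 = n := by
    have := hreg.degree_eq x ▸ G.degree_lt_card_verts x
    rw [card_neighborFinset_eq_degree, degree_compl, hreg.degree_eq x]
    omega
  have hsum := sum_card_inter_neighborFinset_compl hreg hl x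
  have hlow : ∀ w ∈ Gᶜ.neighborFinset x,
      2 * k + 2 ≤ #(G.neighborFinset x ∩ G.neighborFinset w) + n := fun w hw ↦ by
    simpa [hreg.degree_eq, two_mul, add_assoc] using
      degree_add_degree_add_two_le_card_inter_add_card (G := G) (by simpa using hw)
  have htight : ∑ w ∈ Gᶜ.neighborFinset x, (#(G.neighborFinset x ∩ G.neighborFinset w) + n)
      = ∑ w ∈ Gᶜ.neighborFinset x, (2 * k + 2) := by
    rw [sum_add_distrib, sum_const, sum_const, smul_eq_mul, smul_eq_mul]
    zify at hcompl hsum ⊢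
    linear_combination hsum + ((n : ℤ) - 2 * k - 2) * hcompl + h0
  exact ((sum_eq_sum_iff_of_le hlow).1 htight.symm y (by simpa using hxy)).symm

end SimpleGraph

/-- If `Γ` is a non-complete edge-regular graph with parameters `(v, k, λ)` satisfying
`(v-k-1)(v-k-2) - k(v-2k+λ) = 0`, then `Γ` is strongly regular, i.e. there exists `μ`
such that `Γ` is co-edge-regular with parameters `(v, k, μ)`. -/
theorem edgeRegular_eq_zero_stronglyRegular {V : Type*} [Fintype V] (G : SimpleGraph V)
    (v k l : ℕ) (h : IsEdgeRegular G v k l) (hnc : G ≠ ⊤)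
    (h0 : ((v : ℤ) - k - 1) * ((v : ℤ) - k - 2) - (k : ℤ) * ((v : ℤ) - 2 * k + l) = 0) :
    ∃ μ : ℕ, IsCoEdgeRegular G v k μ := by
  classical
  obtain ⟨hv, hk, -, hl⟩ := h
  have hcard : Fintype.card V = v := Nat.card_eq_fintype_card.symm.trans hv
  have hreg : G.IsRegularOfDegree k := fun x ↦ (G.ncard_neighborSet x).symm.trans (hk x)
  have hl' : ∀ x y, G.Adj x y → (G.neighborFinset x ∩ G.neighborFinset y).card = l :=
    fun x y hxy ↦ (G.ncard_commonNeighbors x y).symm.trans (hl x y hxy)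
  refine ⟨2 * k + 2 - v, hv, hk, hnc, fun x y hne hna ↦ ?_⟩
  have hμ := SimpleGraph.card_inter_neighborFinset_add_card_eq_of_compl_adj hreg hl' (hcard ▸ h0)
    ((G.compl_adj x y).2 ⟨hne, hna⟩)
  rw [SimpleGraph.ncard_commonNeighbors]
  omega
end

section
/- Let Γ_1,…,Γ_t be edge-regular graphs, each with parameters (v,k,λ), with pairwise disjoint vertex sets, such that each Γ_i admits a spread of 1-regular cocliques C_{i,1},…,C_{i,k+1}, and let π_1 = id, π_2,…,π_t be permutations of {1,…,k+1}. If t = (λ+2)(k+1)/v (i.e., vt = (λ+2)(k+1)), then the graph F_{(π_2,…,π_t)}(Γ_1,…,Γ_t) is a Neumaier graph with parameters (vt, k+λ+1, λ; 1, λ+2), and it admits a spread of 1-regular cliques. -/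
/-- A Neumaier graph with parameters `(v, k, λ; e, s)` is a non-complete edge-regular
graph with parameters `(v, k, λ)` containing an `e`-regular clique of size `s`. -/
def IsNeumaier {V : Type*} (G : SimpleGraph V) (v k l e s : ℕ) : Prop :=
  IsEdgeRegular G v k l ∧ G ≠ ⊤ ∧ 0 < e ∧
    ∃ S : Set V, G.IsClique S ∧ S.ncard = s ∧
      ∀ x ∉ S, {y ∈ S | G.Adj x y}.ncard = e

theorem IsEdgeRegular.degree_pos {V : Type*} [Finite V] {G : SimpleGraph V} {n k l : ℕ}
    (h : IsEdgeRegular G n k l) : 0 < k := by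
  obtain ⟨-, hdeg, ⟨x, y, hxy⟩, -⟩ := h
  exact hdeg x ▸ (Set.ncard_pos).2 ⟨y, hxy⟩

theorem IsEdgeRegular.ne_top {V : Type*} {G : SimpleGraph V} {n k l : ℕ}
    (h : IsEdgeRegular G n k l) (hn : k + 1 < n) : G ≠ ⊤ := by
  obtain ⟨hcard, hdeg, ⟨x, -, -⟩, -⟩ := h
  have : Finite V := Nat.finite_of_card_ne_zero (by omega)
  rintro rfl
  have := hdeg x
  rw [SimpleGraph.neighborSet_top, Set.ncard_compl, Set.ncard_singleton] at this
  omega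

namespace SimpleGraph

variable {W α : Type*}

/-- The fibres of `L` form a spread of `H` into `1`-regular cocliques. -/
structure IsRegularCocliqueSpread (H : SimpleGraph W) (L : W → α) : Prop where
  not_adj_of_eq : ∀ ⦃x y⦄, L x = L y → ¬ H.Adj x y
  existsUnique_adj : ∀ x a, L x ≠ a → ∃! y, H.Adj x y ∧ L y = a

def joinFibres (H : SimpleGraph W) (L : W → α) : SimpleGraph W where
  Adj x y := x ≠ y ∧ (H.Adj x y ∨ L x = L y)
  symm := ⟨fun _ _ h => ⟨h.1.symm, h.2.imp Adj.symm Eq.symm⟩⟩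

variable {H : SimpleGraph W} {L : W → α} {x y z : W}

@[simp]
theorem joinFibres_adj : (joinFibres H L).Adj x y ↔ x ≠ y ∧ (H.Adj x y ∨ L x = L y) :=
  Iff.rfl

theorem le_joinFibres : H ≤ joinFibres H L := fun _ _ h => ⟨H.ne_of_adj h, Or.inl h⟩

theorem joinFibres_adj_iff_of_ne (h : L x ≠ L y) : (joinFibres H L).Adj x y ↔ H.Adj x y :=
  ⟨fun hxy => hxy.2.resolve_right h, fun hxy => le_joinFibres hxy⟩

theorem isClique_joinFibres_fibre (a : α) : (joinFibres H L).IsClique (L ⁻¹' {a}) :=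
  fun _ hx _ hy hxy => ⟨hxy, Or.inr (hx.trans hy.symm)⟩

namespace IsRegularCocliqueSpread

theorem comp_equiv {β : Type*} (hL : IsRegularCocliqueSpread H L) (e : α ≃ β) :
    IsRegularCocliqueSpread H (e ∘ L) where
  not_adj_of_eq _ _ h := hL.not_adj_of_eq (e.injective h)
  existsUnique_adj x b hb := by
    simpa only [Function.comp_apply, ← e.eq_symm_apply] using
      hL.existsUnique_adj x (e.symm b) (by rwa [Ne, e.eq_symm_apply])

theorem eq_of_adj (hL : IsRegularCocliqueSpread H L) (hx : H.Adj x z) (hy : H.Adj y z)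
    (hxy : L x = L y) : x = y :=
  (hL.existsUnique_adj z (L x) fun h => hL.not_adj_of_eq h hx.symm).unique
    ⟨hx.symm, rfl⟩ ⟨hy.symm, hxy.symm⟩

theorem ncard_fibre_le [Finite W] (hL : IsRegularCocliqueSpread H L) (a b : α) :
    (L ⁻¹' {a}).ncard ≤ (L ⁻¹' {b}).ncard := by
  obtain rfl | hab := eq_or_ne a b
  · rfl
  choose! f hf using fun x (hx : L x = a) => (hL.existsUnique_adj x b (hx ▸ hab)).exists
  refine Set.ncard_le_ncard_of_injOn f (fun x hx => (hf x hx).2) fun x hx x' hx' hff => ?_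
  exact hL.eq_of_adj (hf x hx).1 (hff ▸ (hf x' hx').1) (hx.trans hx'.symm)

theorem ncard_fibre_eq [Finite W] (hL : IsRegularCocliqueSpread H L) (a b : α) :
    (L ⁻¹' {a}).ncard = (L ⁻¹' {b}).ncard :=
  (hL.ncard_fibre_le a b).antisymm (hL.ncard_fibre_le b a)

theorem card_eq_mul_ncard_fibre [Finite W] [Fintype α] (hL : IsRegularCocliqueSpread H L)
    (a : α) : Nat.card W = Fintype.card α * (L ⁻¹' {a}).ncard := by
  calc Nat.card W = ∑ b, (L ⁻¹' {b}).ncard := by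
        rw [← Nat.card_congr (Equiv.sigmaFiberEquiv L), Nat.card_sigma]; rfl
    _ = Fintype.card α * (L ⁻¹' {a}).ncard := by
        simp [hL.ncard_fibre_eq _ a]

theorem ncard_neighborSet_joinFibres_add_one [Finite W] (hL : IsRegularCocliqueSpread H L)
    (x : W) :
    ((joinFibres H L).neighborSet x).ncard + 1 =
      (H.neighborSet x).ncard + (L ⁻¹' {L x}).ncard := by
  have hdisj : Disjoint (H.neighborSet x) (L ⁻¹' {L x} \ {x}) :=
    Set.disjoint_left.2 fun y hxy hy => hL.not_adj_of_eq hy.1.symm hxy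
  have hnbr : (joinFibres H L).neighborSet x = H.neighborSet x ∪ (L ⁻¹' {L x} \ {x}) := by
    ext y
    simp only [mem_neighborSet, joinFibres_adj, Set.mem_union, Set.mem_sdiff,
      Set.mem_preimage, Set.mem_singleton_iff]
    grind [Adj.ne]
  rw [hnbr, Set.ncard_union_eq hdisj, add_assoc,
    Set.ncard_sdiff_singleton_add_one (s := L ⁻¹' {L x}) rfl]

theorem commonNeighbors_joinFibres_of_eq (hL : IsRegularCocliqueSpread H L) (hxy : x ≠ y)
    (h : L x = L y) : (joinFibres H L).commonNeighbors x y = L ⁻¹' {L x} \ {x, y} := by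
  ext u
  simp only [mem_commonNeighbors, joinFibres_adj, Set.mem_sdiff, Set.mem_preimage,
    Set.mem_singleton_iff, Set.mem_insert_iff]
  constructor
  · rintro ⟨⟨hxu, hx⟩, ⟨hyu, hy⟩⟩
    refine ⟨?_, by tauto⟩
    by_contra hu
    have hxu' : H.Adj x u := hx.resolve_right (Ne.symm hu)
    have hyu' : H.Adj y u := hy.resolve_right (h ▸ Ne.symm hu)
    exact hxy (hL.eq_of_adj hxu' hyu' h)
  · rintro ⟨hu, hne⟩
    obtain ⟨hux, huy⟩ := not_or.1 hne
    exact ⟨⟨Ne.symm hux, Or.inr hu.symm⟩, ⟨Ne.symm huy, Or.inr (h ▸ hu.symm)⟩⟩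

theorem commonNeighbors_joinFibres_of_adj (hL : IsRegularCocliqueSpread H L) (h : H.Adj x y) :
    (joinFibres H L).commonNeighbors x y = H.commonNeighbors x y := by
  have hxy : L x ≠ L y := fun e => hL.not_adj_of_eq e h
  ext u
  simp only [mem_commonNeighbors]
  refine ⟨fun ⟨hxu, hyu⟩ => ?_, fun ⟨hxu, hyu⟩ => ⟨le_joinFibres hxu, le_joinFibres hyu⟩⟩
  by_cases hux : L u = L x
  · have huy : H.Adj u y := (joinFibres_adj_iff_of_ne (by rwa [hux])).1 hyu.symm
    exact absurd (hL.eq_of_adj huy h hux).symm ((joinFibres H L).ne_of_adj hxu)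
  have hxu' : H.Adj x u := (joinFibres_adj_iff_of_ne (Ne.symm hux)).1 hxu
  by_cases huy : L u = L y
  · exact absurd (hL.eq_of_adj hxu'.symm h.symm huy).symm ((joinFibres H L).ne_of_adj hyu)
  exact ⟨hxu', (joinFibres_adj_iff_of_ne (Ne.symm huy)).1 hyu⟩

theorem ncard_adj_fibre_eq_one (hL : IsRegularCocliqueSpread H L) {a : α}
    (hx : x ∉ L ⁻¹' {a}) : {y ∈ L ⁻¹' {a} | (joinFibres H L).Adj x y}.ncard = 1 := by
  obtain ⟨y, hy, huniq⟩ := hL.existsUnique_adj x a hx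
  refine Set.ncard_eq_one.2 ⟨y, Set.ext fun z => ⟨fun ⟨hz, hxz⟩ => ?_, ?_⟩⟩
  · exact huniq z ⟨(joinFibres_adj_iff_of_ne (hz ▸ hx)).1 hxz, hz⟩
  · rintro rfl
    exact ⟨hy.2, le_joinFibres hy.1⟩

theorem isEdgeRegular_joinFibres [Finite W] (hL : IsRegularCocliqueSpread H L) {n k l : ℕ}
    (hH : IsEdgeRegular H n k l) (hfib : ∀ a, (L ⁻¹' {a}).ncard = l + 2) :
    IsEdgeRegular (joinFibres H L) n (k + l + 1) l := by
  obtain ⟨hcard, hdeg, ⟨x₀, y₀, hxy₀⟩, hcommon⟩ := hH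
  refine ⟨hcard, fun x => ?_, ⟨x₀, y₀, le_joinFibres hxy₀⟩, fun x y hxy => ?_⟩
  · have := hL.ncard_neighborSet_joinFibres_add_one x
    rw [hdeg, hfib] at this
    omega
  by_cases h : L x = L y
  · have hpair : {x, y} ⊆ L ⁻¹' {L x} := Set.pair_subset rfl h.symm
    rw [hL.commonNeighbors_joinFibres_of_eq hxy.ne h, Set.ncard_sdiff hpair, hfib,
      Set.ncard_pair hxy.ne]
    omega
  · have hxyH : H.Adj x y := (joinFibres_adj_iff_of_ne h).1 hxy
    rw [hL.commonNeighbors_joinFibres_of_adj hxyH]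
    exact hcommon x y hxyH

theorem isNeumaier_joinFibres [Finite W] (hL : IsRegularCocliqueSpread H L) {n k l : ℕ}
    (hH : IsEdgeRegular H n k l) (hfib : ∀ a, (L ⁻¹' {a}).ncard = l + 2) (a : α)
    (hn : k + l + 2 < n) : IsNeumaier (joinFibres H L) n (k + l + 1) l 1 (l + 2) :=
  ⟨hL.isEdgeRegular_joinFibres hH hfib, (hL.isEdgeRegular_joinFibres hH hfib).ne_top hn,
    one_pos, L ⁻¹' {a}, isClique_joinFibres_fibre a, hfib a,
    fun _ hx => hL.ncard_adj_fibre_eq_one hx⟩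

theorem exists_isPartition_regular_cliques (hL : IsRegularCocliqueSpread H L) :
    ∃ P : Set (Set W), Setoid.IsPartition P ∧ ∀ C ∈ P, (joinFibres H L).IsClique C ∧
      ∀ x ∉ C, {y ∈ C | (joinFibres H L).Adj x y}.ncard = 1 := by
  refine ⟨(Setoid.ker L).classes, Setoid.isPartition_classes _, ?_⟩
  rintro _ ⟨y, rfl⟩
  exact ⟨isClique_joinFibres_fibre (L y), fun x hx => hL.ncard_adj_fibre_eq_one hx⟩

end IsRegularCocliqueSpread

section Sigma

variable {ι : Type*} {V : ι → Type*} {G : ∀ i, SimpleGraph (V i)}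

/-- The disjoint union of the graphs `G i`. Adjacency is phrased so as to avoid transporting
`w.2` along an equation `z.1 = w.1`. -/
def sigmaGraph (G : ∀ i, SimpleGraph (V i)) : SimpleGraph (Σ i, V i) where
  Adj z w := ∃ y, (G z.1).Adj z.2 y ∧ ⟨z.1, y⟩ = w
  symm := ⟨by
    rintro ⟨i, x⟩ _ ⟨y, hxy, rfl⟩
    exact ⟨x, hxy.symm, rfl⟩⟩
  loopless := ⟨by
    rintro ⟨i, x⟩ ⟨y, hxy, hyx⟩
    exact hxy.ne (sigma_mk_injective hyx).symm⟩

theorem sigmaGraph_adj_mk {i : ι} {x y : V i} :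
    (sigmaGraph G).Adj ⟨i, x⟩ ⟨i, y⟩ ↔ (G i).Adj x y :=
  ⟨fun ⟨_, hxy, hy⟩ => sigma_mk_injective hy ▸ hxy, fun hxy => ⟨y, hxy, rfl⟩⟩

theorem neighborSet_sigmaGraph (i : ι) (x : V i) :
    (sigmaGraph G).neighborSet ⟨i, x⟩ = Sigma.mk i '' (G i).neighborSet x :=
  rfl

theorem commonNeighbors_sigmaGraph (i : ι) (x y : V i) :
    (sigmaGraph G).commonNeighbors ⟨i, x⟩ ⟨i, y⟩ = Sigma.mk i '' (G i).commonNeighbors x y := by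
  simp only [commonNeighbors, neighborSet_sigmaGraph, Set.image_inter sigma_mk_injective]

theorem IsRegularCocliqueSpread.sigma {α : Type*} {c : ∀ i, V i → α}
    (h : ∀ i, IsRegularCocliqueSpread (G i) (c i)) :
    IsRegularCocliqueSpread (sigmaGraph G) (fun z => c z.1 z.2) where
  not_adj_of_eq := by
    rintro ⟨i, x⟩ _ hc ⟨y, hxy, rfl⟩
    exact (h i).not_adj_of_eq hc hxy
  existsUnique_adj := by
    rintro ⟨i, x⟩ a ha
    obtain ⟨y, hy, huniq⟩ := (h i).existsUnique_adj x a ha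
    refine ⟨⟨i, y⟩, ⟨sigmaGraph_adj_mk.2 hy.1, hy.2⟩, ?_⟩
    rintro _ ⟨⟨y', hxy', rfl⟩, hc⟩
    rw [huniq y' ⟨hxy', hc⟩]

theorem _root_.IsEdgeRegular.sigmaGraph [Fintype ι] [Nonempty ι] [∀ i, Finite (V i)]
    {v k l : ℕ} (h : ∀ i, IsEdgeRegular (G i) v k l) :
    IsEdgeRegular (sigmaGraph G) (v * Fintype.card ι) k l := by
  refine ⟨?_, ?_, ?_, ?_⟩
  · simp [Nat.card_sigma, (h _).1, mul_comm]
  · rintro ⟨i, x⟩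
    rw [neighborSet_sigmaGraph, Set.ncard_image_of_injective _ sigma_mk_injective, (h i).2.1]
  · obtain ⟨i⟩ := ‹Nonempty ι›
    obtain ⟨x, y, hxy⟩ := (h i).2.2.1
    exact ⟨⟨i, x⟩, ⟨i, y⟩, sigmaGraph_adj_mk.2 hxy⟩
  · rintro ⟨i, x⟩ _ ⟨y, hxy, rfl⟩
    rw [commonNeighbors_sigmaGraph, Set.ncard_image_of_injective _ sigma_mk_injective,
      (h i).2.2.2 x y hxy]

end Sigma

end SimpleGraph

/-- The graphs `Γ_i` are the summands of `Σ i, V i`, and the cocliques `C_{i,m}` of the spread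
of `Γ_i` are the fibres of `c i`. -/
theorem construction_neumaier_general (t v k l : ℕ)
    (V : Fin t → Type*) [∀ i, Fintype (V i)] (G : ∀ i, SimpleGraph (V i))
    (hER : ∀ i, IsEdgeRegular (G i) v k l)
    (c : ∀ i, V i → Fin (k + 1))
    (hcoclique : ∀ i, ∀ x y : V i, c i x = c i y → ¬ (G i).Adj x y)
    (hreg : ∀ i, ∀ x : V i, ∀ j : Fin (k + 1), c i x ≠ j →
      ∃! y : V i, (G i).Adj x y ∧ c i y = j)
    (π : Fin t → Equiv.Perm (Fin (k + 1)))
    (hvt : v * t = (l + 2) * (k + 1))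
    (F : SimpleGraph (Σ i, V i))
    (hF : ∀ (i j : Fin t) (x : V i) (y : V j),
      F.Adj ⟨i, x⟩ ⟨j, y⟩ ↔ ((⟨i, x⟩ : Σ i, V i) ≠ ⟨j, y⟩ ∧
        ((∃ y' : V i, (G i).Adj x y' ∧ (⟨i, y'⟩ : Σ i, V i) = ⟨j, y⟩) ∨
          (π i)⁻¹ (c i x) = (π j)⁻¹ (c j y)))) :
    IsNeumaier F (v * t) (k + l + 1) l 1 (l + 2) ∧
      ∃ P : Set (Set (Σ i, V i)), Setoid.IsPartition P ∧
        ∀ C ∈ P, F.IsClique C ∧ ∀ x ∉ C, {y ∈ C | F.Adj x y}.ncard = 1 := by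
  have : NeZero t := ⟨by rintro rfl; simp at hvt⟩
  set L : (Σ i, V i) → Fin (k + 1) := fun z => (π z.1)⁻¹ (c z.1 z.2)
  have hL : (SimpleGraph.sigmaGraph G).IsRegularCocliqueSpread L := .sigma fun i =>
    (SimpleGraph.IsRegularCocliqueSpread.mk (hcoclique i) (hreg i)).comp_equiv (π i)⁻¹
  have hH : IsEdgeRegular (SimpleGraph.sigmaGraph G) (v * t) k l := by
    simpa using IsEdgeRegular.sigmaGraph hER
  have hfib (a : Fin (k + 1)) : (L ⁻¹' {a}).ncard = l + 2 := by
    have := hL.card_eq_mul_ncard_fibre a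
    rw [hH.1, hvt, Fintype.card_fin, mul_comm] at this
    exact (Nat.eq_of_mul_eq_mul_left k.succ_pos this).symm
  have hn : k + l + 2 < v * t := by
    have := hH.degree_pos
    rw [hvt]
    nlinarith
  obtain rfl : F = (SimpleGraph.sigmaGraph G).joinFibres L := by
    ext ⟨i, x⟩ ⟨j, y⟩
    exact hF i j x y
  exact ⟨hL.isNeumaier_joinFibres hH hfib 0 hn, hL.exists_isPartition_regular_cliques⟩

/-- Let `Γ₁, …, Γ_t` be edge-regular graphs with parameters `(v, k, λ)` on pairwise
disjoint vertex sets (modelled as a sigma type over a family `V : Fin t → Type*`), each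
admitting a spread of `1`-regular cocliques `C_{i,1}, …, C_{i,k+1}` (modelled by a
labelling `c i : V i → Fin (k+1)` of each vertex by its coclique: the cocliques are the
fibres of `c i`), and let `π₁ = id, π₂, …, π_t` be permutations of the `k+1` labels.
If `v * t = (λ+2) * (k+1)`, then the graph `F_{(π₂,…,π_t)}(Γ₁,…,Γ_t)` — whose vertices
are those of all the `Γ_i` and in which distinct vertices `x ∈ C_{i,k}`, `y ∈ C_{j,l}`
are adjacent iff (`i = j` and `x ∼ y` in `Γ_i`) or `π_i⁻¹ k = π_j⁻¹ l` — is a Neumaier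
graph with parameters `(v t, k + λ + 1, λ; 1, λ + 2)` admitting a spread of `1`-regular
cliques. -/
theorem construction_neumaier (t v k l : ℕ) (ht : 0 < t)
    (V : Fin t → Type*) [∀ i, Fintype (V i)] (G : ∀ i, SimpleGraph (V i))
    (hER : ∀ i, IsEdgeRegular (G i) v k l)
    (c : ∀ i, V i → Fin (k + 1))
    (hcoclique : ∀ i, ∀ x y : V i, c i x = c i y → ¬ (G i).Adj x y)
    (hreg : ∀ i, ∀ x : V i, ∀ j : Fin (k + 1), c i x ≠ j →
      ∃! y : V i, (G i).Adj x y ∧ c i y = j)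
    (π : Fin t → Equiv.Perm (Fin (k + 1))) (hπ : π ⟨0, ht⟩ = 1)
    (hvt : v * t = (l + 2) * (k + 1))
    (F : SimpleGraph (Σ i, V i))
    (hF : ∀ (i j : Fin t) (x : V i) (y : V j),
      F.Adj ⟨i, x⟩ ⟨j, y⟩ ↔ ((⟨i, x⟩ : Σ i, V i) ≠ ⟨j, y⟩ ∧
        ((∃ y' : V i, (G i).Adj x y' ∧ (⟨i, y'⟩ : Σ i, V i) = ⟨j, y⟩) ∨
          (π i)⁻¹ (c i x) = (π j)⁻¹ (c j y)))) :
    IsNeumaier F (v * t) (k + l + 1) l 1 (l + 2) ∧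
      ∃ P : Set (Set (Σ i, V i)), Setoid.IsPartition P ∧
        ∀ C ∈ P, F.IsClique C ∧ ∀ x ∉ C, {y ∈ C | F.Adj x y}.ncard = 1 :=
  construction_neumaier_general t v k l V G hER c hcoclique hreg π hvt F hF
end

section
/- Let p be an odd prime, q an odd positive integer, and a ∈ (ℤ/pqℤ)* such that the reduction of a modulo p is a generator of the cyclic group (ℤ/pℤ)* and a^{(p−1)/2} ≡ −1 (mod pq). Then the Cayley graph Γ_{pq}(a) on ℤ/pqℤ with connection set S_{pq}(a) is an edge-regular graph with parameters (pq, p−1, λ), where λ = |S_{pq}(a) ∩ (S_{pq}(a)+1)|. -/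
/-- `S_n(a)`: the set of powers of the unit `a` in `ℤ/nℤ`.  When `a` has even order `2i`,
this is exactly `{a^j : 0 ≤ j < 2i}`. -/
def powSet (n : ℕ) (a : (ZMod n)ˣ) : Set (ZMod n) :=
  {x : ZMod n | ∃ j : ℕ, x = (a : ZMod n) ^ j}

/-- Let `p` be an odd prime and `q` an odd positive integer.  If `a ∈ (ℤ/pqℤ)*` is such
that `a mod p` generates `(ℤ/pℤ)*` and `a^((p-1)/2) ≡ -1 (mod pq)`, then the Cayley graph
`Γ_{pq}(a)` on `ℤ/pqℤ` with connection set `S = S_{pq}(a)` (distinct `x, y` adjacent iff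
`x - y ∈ S`) is edge-regular with parameters `(pq, p-1, λ)`, where `λ = |S ∩ (S+1)|`. -/
theorem cayley_edgeRegular (p q : ℕ) (hp : p.Prime) (hpodd : Odd p) (hqodd : Odd q)
    (hq : 0 < q) (a : (ZMod (p * q))ˣ)
    (hgen : ∀ x : (ZMod p)ˣ, x ∈ Subgroup.zpowers
      (Units.map (ZMod.castHom (dvd_mul_right p q) (ZMod p)).toMonoidHom a))
    (hneg : (a : ZMod (p * q)) ^ ((p - 1) / 2) = -1)
    (Γ : SimpleGraph (ZMod (p * q)))
    (hΓ : ∀ x y : ZMod (p * q), Γ.Adj x y ↔ x ≠ y ∧ x - y ∈ powSet (p * q) a) :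
    IsEdgeRegular Γ (p * q) (p - 1)
      ((powSet (p * q) a ∩ ((· + 1) '' powSet (p * q) a)).ncard) := by
  have hp3 : 3 ≤ p := by
    rcases hpodd with ⟨k, hk⟩
    have := hp.two_le
    omega
  have hpq1 : 1 < p * q := by nlinarith
  haveI : NeZero (p * q) := ⟨by positivity⟩
  haveI : Fact (1 < p * q) := ⟨hpq1⟩
  set S := powSet (p * q) a with hS
  have hmemS : ∀ j : ℕ, (a : ZMod (p * q)) ^ j ∈ S := fun j => ⟨j, rfl⟩
  -- a^(p-1) = 1 in ZMod (p*q)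
  have hpeven : (p - 1) / 2 * 2 = p - 1 := by
    obtain ⟨k, hk⟩ := hpodd
    omega
  have hp1 : (a : ZMod (p * q)) ^ (p - 1) = 1 := by
    rw [← hpeven, pow_mul, hneg]; ring
  -- order of a is p - 1
  have hup1 : a ^ (p - 1) = 1 := by
    ext; push_cast; exact hp1
  have horder : orderOf a = p - 1 := by
    have h1 : orderOf a ∣ p - 1 := orderOf_dvd_of_pow_eq_one hup1
    have h2 : (p - 1) ∣ orderOf a := by
      have hb := hgen
      set b := (Units.map (ZMod.castHom (dvd_mul_right p q) (ZMod p)).toMonoidHom) a with hbdef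
      haveI : Fact p.Prime := ⟨hp⟩
      have hob : orderOf b = p - 1 := by
        rw [orderOf_eq_card_of_forall_mem_zpowers hb, Nat.card_eq_fintype_card,
          ZMod.card_units_eq_totient, Nat.totient_prime hp]
      rw [← hob]
      exact orderOf_map_dvd _ a
    exact Nat.dvd_antisymm h1 h2
  have hppos : 0 < p - 1 := by omega
  -- 0 ∉ S
  have h0S : (0 : ZMod (p * q)) ∉ S := by
    rintro ⟨j, hj⟩
    have : IsUnit ((a : ZMod (p * q)) ^ j) := a.isUnit.pow j
    rw [← hj] at this
    exact this.ne_zero rfl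
  -- |S| = p - 1
  have hinj : Set.InjOn (fun j : ℕ => (a : ZMod (p * q)) ^ j) (Set.Iio (p - 1)) := by
    intro i hi j hj hij
    have h' : a ^ i = a ^ j := by ext; push_cast; exact hij
    rw [← horder] at hi hj
    exact pow_injOn_Iio_orderOf hi hj h'
  have hSeq : S = (fun j : ℕ => (a : ZMod (p * q)) ^ j) '' (Set.Iio (p - 1)) := by
    ext z
    constructor
    · rintro ⟨j, rfl⟩
      refine ⟨j % (p - 1), Nat.mod_lt _ hppos, ?_⟩
      conv_rhs => rw [← Nat.div_add_mod j (p - 1)]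
      rw [pow_add, pow_mul, hp1, one_pow, one_mul]
    · rintro ⟨j, _, rfl⟩; exact hmemS j
  have hScard : S.ncard = p - 1 := by
    rw [hSeq, Set.ncard_image_of_injOn hinj]
    rw [← Finset.coe_range, Set.ncard_coe_finset, Finset.card_range]
  -- multiplication by a^m preserves S
  have hSmul : ∀ m : ℕ, ((a : ZMod (p * q)) ^ m * ·) '' S = S := by
    intro m
    ext z
    constructor
    · rintro ⟨w, ⟨j, rfl⟩, rfl⟩
      exact ⟨m + j, by rw [pow_add]⟩
    · rintro ⟨j, rfl⟩
      refine ⟨(a : ZMod (p * q)) ^ (j + m * (p - 2)), hmemS _, ?_⟩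
      simp only
      rw [← pow_add]
      have hexp : m + (j + m * (p - 2)) = j + (p - 1) * m := by
        have : p - 1 = (p - 2) + 1 := by omega
        rw [this]; ring
      rw [hexp, pow_add, pow_mul, hp1, one_pow, mul_one]
  -- neighbor sets
  have hnbhd : ∀ x : ZMod (p * q), Γ.neighborSet x = (fun s => x - s) '' S := by
    intro x
    ext y
    rw [SimpleGraph.mem_neighborSet, hΓ]
    constructor
    · rintro ⟨hne, hs⟩
      exact ⟨x - y, hs, by ring⟩
    · rintro ⟨s, hs, rfl⟩
      refine ⟨?_, by simpa using hs⟩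
      intro h
      apply h0S
      have : s = 0 := by linear_combination h
      rwa [this] at hs
  constructor
  · simp [Nat.card_eq_fintype_card, ZMod.card]
  refine ⟨?_, ?_, ?_⟩
  · intro x
    rw [hnbhd x, Set.ncard_image_of_injective _ (sub_right_injective), hScard]
  · refine ⟨1, 0, ?_⟩
    rw [hΓ]
    exact ⟨one_ne_zero, by simpa using hmemS 0⟩
  · intro x y hxy
    rw [hΓ] at hxy
    obtain ⟨hne, m, hm⟩ := hxy
    -- common neighbors = (x - ·) '' (S ∩ (S + s)) with s = x - y
    have hCN : Γ.commonNeighbors x y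
        = (fun w => x - w) '' (S ∩ ((· + (x - y)) '' S)) := by
      unfold SimpleGraph.commonNeighbors
      rw [hnbhd x, hnbhd y]
      ext z
      constructor
      · rintro ⟨⟨s, hs, rfl⟩, ⟨t, ht, hts⟩⟩
        refine ⟨s, ⟨hs, ⟨t, ht, ?_⟩⟩, rfl⟩
        linear_combination -hts
      · rintro ⟨w, ⟨hw, ⟨t, ht, htw⟩⟩, rfl⟩
        exact ⟨⟨w, hw, rfl⟩, ⟨t, ht, by linear_combination -htw⟩⟩
    rw [hCN, Set.ncard_image_of_injective _ sub_right_injective]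
    -- S ∩ (S + s) = (a^m * ·) '' (S ∩ (S + 1))
    have hkey : S ∩ ((· + (x - y)) '' S)
        = ((a : ZMod (p * q)) ^ m * ·) '' (S ∩ ((· + 1) '' S)) := by
      have hu : IsUnit ((a : ZMod (p * q)) ^ m) := (a.isUnit).pow m
      rw [Set.image_inter hu.mul_right_injective, hSmul m]
      congr 1
      rw [← Set.image_comp]
      have : ((a : ZMod (p * q)) ^ m * ·) ∘ (· + 1)
          = (· + (x - y)) ∘ ((a : ZMod (p * q)) ^ m * ·) := by
        funext t
        simp only [Function.comp_apply]
        rw [hm]; ring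
      rw [this, Set.image_comp, hSmul m]
    rw [hkey, Set.ncard_image_of_injective _ ((a.isUnit.pow m).mul_right_injective)]
end

section
/- Let p be an odd prime, q an odd positive integer, and a ∈ (ℤ/pqℤ)* such that the reduction of a modulo p is a generator of the cyclic group (ℤ/pℤ)* and a^{(p−1)/2} ≡ −1 (mod pq). Let H be the subgroup of the additive group ℤ/pqℤ generated by p (so |H| = q). Then every coset of H is a 1-regular coclique of the Cayley graph Γ_{pq}(a): no two elements of a coset are adjacent, and every vertex outside a coset has exactly one neighbour in it. Consequently the cosets of H form a spread of 1-regular cocliques of Γ_{pq}(a). -/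
/-!
Write `H = ⟨p⟩ ≤ ℤ/pqℤ`; it is the kernel of reduction mod `p`. Reduction maps the powers of `a`
onto `(ℤ/pℤ)*`, as `a mod p` is a generator, and injectively, since `a^(p-1) = 1` forces the order
of `a` to equal that of its reduction. So no power of `a` lies in `H`, which makes every coset of
`H` a coclique, and each nonzero class mod `p` contains exactly one power of `a`, which gives every
vertex outside a coset exactly one neighbour in it.
-/

theorem AddSubgroup.isPartition_sub_mem {G : Type*} [AddGroup G] (H : AddSubgroup G) :
    Setoid.IsPartition {C : Set G | ∃ r, C = {x | x - r ∈ H}} := by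
  convert Setoid.isPartition_classes (QuotientAddGroup.rightRel H) using 1
  ext C
  refine exists_congr fun r => Eq.congr_right (Set.ext fun x => ?_)
  rw [Set.mem_ofPred_eq, Set.mem_ofPred_eq, Setoid.comm', QuotientAddGroup.rightRel_apply,
    sub_eq_add_neg]

section CayleyCoset

variable {G : Type*} [AddCommGroup G] {S : Set G} {H : AddSubgroup G} {Γ : SimpleGraph G}

theorem cayley_coset_isCoclique (hΓ : ∀ x y, Γ.Adj x y ↔ x ≠ y ∧ x - y ∈ S)
    (hSH : ∀ s ∈ S, s ∉ H) (r : G) {x y : G} (hx : x - r ∈ H) (hy : y - r ∈ H) :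
    ¬ Γ.Adj x y := fun hxy =>
  hSH _ ((hΓ x y).1 hxy).2 (by simpa only [sub_sub_sub_cancel_right] using H.sub_mem hx hy)

theorem cayley_coset_existsUnique_adj (hΓ : ∀ x y, Γ.Adj x y ↔ x ≠ y ∧ x - y ∈ S)
    (hSH : ∀ s ∈ S, s ∉ H) (hS : ∀ c ∉ H, ∃! s, s ∈ S ∧ c - s ∈ H) (r : G) {x : G}
    (hx : x - r ∉ H) : ∃! y, y - r ∈ H ∧ Γ.Adj x y := by
  obtain ⟨s, ⟨hsS, hs⟩, huniq⟩ := hS (x - r) hx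
  have hs0 : s ≠ 0 := fun h => hSH s hsS (h ▸ H.zero_mem)
  refine ⟨x - s, ⟨by rwa [sub_right_comm], (hΓ _ _).2 ⟨?_, by rwa [sub_sub_cancel]⟩⟩, ?_⟩
  · simpa only [ne_eq, eq_sub_iff_add_eq, add_eq_left] using hs0
  · rintro y ⟨hy, hxy⟩
    have hsy := huniq (x - y) ⟨((hΓ x y).1 hxy).2, by rwa [sub_sub_sub_cancel_left]⟩
    rw [← hsy, sub_sub_cancel]

end CayleyCoset

section PowersUnderHom

variable {G K : Type*}

theorem orderOf_map_eq_of_forall_mem_zpowers [Monoid G] [Group K] [Finite K] (φ : G →* K)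
    {a : G} (hgen : ∀ x, x ∈ Subgroup.zpowers (φ a)) (ha : a ^ Nat.card K = 1) :
    orderOf (φ a) = orderOf a :=
  (orderOf_map_dvd φ a).antisymm <| by
    rw [orderOf_eq_card_of_forall_mem_zpowers hgen]
    exact orderOf_dvd_of_pow_eq_one ha

theorem pow_eq_pow_of_map_pow_eq [LeftCancelMonoid G] [LeftCancelMonoid K] (φ : G →* K) {a : G}
    (h : orderOf (φ a) = orderOf a) {j k : ℕ} (hjk : φ a ^ j = φ a ^ k) : a ^ j = a ^ k := by
  rwa [pow_eq_pow_iff_modEq, ← h, ← pow_eq_pow_iff_modEq]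

end PowersUnderHom

theorem ZMod.mem_zmultiples_natCast_iff {m n : ℕ} (h : m ∣ n) (z : ZMod n) :
    z ∈ AddSubgroup.zmultiples (m : ZMod n) ↔ ZMod.castHom h (ZMod m) z = 0 := by
  constructor
  · rintro ⟨l, rfl⟩
    rw [map_zsmul, map_natCast, ZMod.natCast_self, smul_zero]
  · obtain ⟨k, rfl⟩ := ZMod.intCast_surjective z
    rw [map_intCast, ZMod.intCast_zmod_eq_zero_iff_dvd]
    rintro ⟨l, rfl⟩
    exact ⟨l, by push_cast; rw [zsmul_eq_mul, mul_comm]⟩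

section PowSet

variable {m n : ℕ} (a : (ZMod n)ˣ)

theorem ZMod.castHom_pow_eq_val_map_pow (h : m ∣ n) (j : ℕ) :
    ZMod.castHom h (ZMod m) ((a : ZMod n) ^ j) =
      ((Units.map (ZMod.castHom h (ZMod m)).toMonoidHom a ^ j : (ZMod m)ˣ) : ZMod m) := by
  rw [map_pow, Units.val_pow_eq_pow_val, Units.coe_map]
  rfl

theorem powSet_notMem_zmultiples (h : m ∣ n) [Nontrivial (ZMod m)] {s : ZMod n}
    (hs : s ∈ powSet n a) :
    s ∉ AddSubgroup.zmultiples (m : ZMod n) := by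
  obtain ⟨j, rfl⟩ := hs
  rw [ZMod.mem_zmultiples_natCast_iff h, ZMod.castHom_pow_eq_val_map_pow]
  exact Units.ne_zero _

theorem existsUnique_powSet_sub_mem_zmultiples (h : m ∣ n) [Fact m.Prime]
    (hgen : ∀ x : (ZMod m)ˣ,
      x ∈ Subgroup.zpowers (Units.map (ZMod.castHom h (ZMod m)).toMonoidHom a))
    (ha : a ^ (m - 1) = 1) {c : ZMod n} (hc : c ∉ AddSubgroup.zmultiples (m : ZMod n)) :
    ∃! s, s ∈ powSet n a ∧ c - s ∈ AddSubgroup.zmultiples (m : ZMod n) := by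
  set φ := Units.map (ZMod.castHom h (ZMod m)).toMonoidHom
  have hord : orderOf (φ a) = orderOf a := orderOf_map_eq_of_forall_mem_zpowers φ hgen
    (by rwa [Nat.card_eq_fintype_card, ZMod.card_units])
  simp only [ZMod.mem_zmultiples_natCast_iff h, map_sub, sub_eq_zero] at hc ⊢
  obtain ⟨u, hu⟩ := isUnit_iff_ne_zero.mpr hc
  obtain ⟨j, hj⟩ := mem_powers_iff_mem_zpowers.mpr (hgen u)
  refine ⟨(a : ZMod n) ^ j, ⟨⟨j, rfl⟩, ?_⟩, ?_⟩
  · rw [ZMod.castHom_pow_eq_val_map_pow, ← hu, ← hj]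
  · rintro _ ⟨⟨k, rfl⟩, hk⟩
    have hjk : φ a ^ k = φ a ^ j := by
      ext
      rw [← ZMod.castHom_pow_eq_val_map_pow, ← hk, ← hu, ← hj]
    rw [← Units.val_pow_eq_pow_val, ← Units.val_pow_eq_pow_val,
      pow_eq_pow_of_map_pow_eq φ hord hjk]

end PowSet

theorem cosets_one_regular_cocliques_general (p q : ℕ) (hp : p.Prime) (hpodd : Odd p)
    (a : (ZMod (p * q))ˣ)
    (hgen : ∀ x : (ZMod p)ˣ, x ∈ Subgroup.zpowers
      (Units.map (ZMod.castHom (dvd_mul_right p q) (ZMod p)).toMonoidHom a))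
    (hneg : (a : ZMod (p * q)) ^ ((p - 1) / 2) = -1)
    (Γ : SimpleGraph (ZMod (p * q)))
    (hΓ : ∀ x y : ZMod (p * q), Γ.Adj x y ↔ x ≠ y ∧ x - y ∈ powSet (p * q) a) :
    (∀ r : ZMod (p * q),
      (∀ x y : ZMod (p * q),
        x - r ∈ AddSubgroup.zmultiples ((p : ZMod (p * q))) →
        y - r ∈ AddSubgroup.zmultiples ((p : ZMod (p * q))) → ¬ Γ.Adj x y) ∧
      (∀ x : ZMod (p * q), x - r ∉ AddSubgroup.zmultiples ((p : ZMod (p * q))) →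
        ∃! y : ZMod (p * q),
          y - r ∈ AddSubgroup.zmultiples ((p : ZMod (p * q))) ∧ Γ.Adj x y)) ∧
    Setoid.IsPartition
      {C : Set (ZMod (p * q)) | ∃ r : ZMod (p * q),
        C = {x : ZMod (p * q) | x - r ∈ AddSubgroup.zmultiples ((p : ZMod (p * q)))}} := by
  have := Fact.mk hp
  have hp2 : 2 ∣ p - 1 := (Nat.Odd.sub_odd hpodd odd_one).two_dvd
  have ha : a ^ (p - 1) = 1 := Units.ext <| by
    rw [Units.val_pow_eq_pow_val, ← Nat.div_mul_cancel hp2, pow_mul, hneg, neg_one_sq,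
      Units.val_one]
  have hpq := dvd_mul_right p q
  have hSH : ∀ s ∈ powSet (p * q) a, s ∉ AddSubgroup.zmultiples (p : ZMod (p * q)) :=
    fun _ => powSet_notMem_zmultiples a hpq
  have hS : ∀ c ∉ AddSubgroup.zmultiples (p : ZMod (p * q)),
      ∃! s, s ∈ powSet (p * q) a ∧ c - s ∈ AddSubgroup.zmultiples (p : ZMod (p * q)) :=
    fun _ => existsUnique_powSet_sub_mem_zmultiples a hpq hgen ha
  exact ⟨fun r => ⟨fun _ _ => cayley_coset_isCoclique hΓ hSH r,
    fun _ => cayley_coset_existsUnique_adj hΓ hSH hS r⟩, AddSubgroup.isPartition_sub_mem _⟩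

/-- Let `p` be an odd prime and `q` an odd positive integer, and let `a ∈ (ℤ/pqℤ)*` be
such that `a mod p` generates `(ℤ/pℤ)*` and `a^((p-1)/2) ≡ -1 (mod pq)`.  Let `H` be the
(additive) subgroup of `ℤ/pqℤ` generated by `p`.  Then every coset of `H` is a
`1`-regular coclique of the Cayley graph `Γ_{pq}(a)`: no two of its elements are
adjacent, and every vertex outside it has exactly one neighbour in it.  Consequently the
cosets of `H` form a spread (a partition of the vertex set) of `1`-regular cocliques. -/
theorem cosets_one_regular_cocliques (p q : ℕ) (hp : p.Prime) (hpodd : Odd p)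
    (hqodd : Odd q) (hq : 0 < q) (a : (ZMod (p * q))ˣ)
    (hgen : ∀ x : (ZMod p)ˣ, x ∈ Subgroup.zpowers
      (Units.map (ZMod.castHom (dvd_mul_right p q) (ZMod p)).toMonoidHom a))
    (hneg : (a : ZMod (p * q)) ^ ((p - 1) / 2) = -1)
    (Γ : SimpleGraph (ZMod (p * q)))
    (hΓ : ∀ x y : ZMod (p * q), Γ.Adj x y ↔ x ≠ y ∧ x - y ∈ powSet (p * q) a) :
    (∀ r : ZMod (p * q),
      (∀ x y : ZMod (p * q),
        x - r ∈ AddSubgroup.zmultiples ((p : ZMod (p * q))) →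
        y - r ∈ AddSubgroup.zmultiples ((p : ZMod (p * q))) → ¬ Γ.Adj x y) ∧
      (∀ x : ZMod (p * q), x - r ∉ AddSubgroup.zmultiples ((p : ZMod (p * q))) →
        ∃! y : ZMod (p * q),
          y - r ∈ AddSubgroup.zmultiples ((p : ZMod (p * q))) ∧ Γ.Adj x y)) ∧
    Setoid.IsPartition
      {C : Set (ZMod (p * q)) | ∃ r : ZMod (p * q),
        C = {x : ZMod (p * q) | x - r ∈ AddSubgroup.zmultiples ((p : ZMod (p * q)))}} :=
  cosets_one_regular_cocliques_general p q hp hpodd a hgen hneg Γ hΓ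
end

section
/- Let p and q be two different odd primes and let a ∈ (ℤ/pqℤ)* be such that the reduction of a modulo p is a generator of (ℤ/pℤ)* and a^{(p−1)/2} ≡ −1 (mod pq). Write S = S_{pq}(a) and λ = |S ∩ (S+1)|. If λ ≡ −2 (mod q), then for t = (λ+2)/q and any permutations π_2,…,π_t of the p cocliques, the graph F_{(π_2,…,π_t)} built from t disjoint copies of the Cayley graph Γ_{pq}(a) (each with its spread of 1-regular cocliques given by the cosets of the subgroup generated by p) is a Neumaier graph with parameters (tpq, p−1+λ+1, λ; 1, λ+2), i.e., with parameters (tpq, p+λ, λ; 1, λ+2). -/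
/-!
Reduction mod `p` maps `S = S_{pq}(a)` bijectively onto `(ℤ/pℤ)*`. Hence the fibres of reduction
mod `p` are cocliques of `Γ = Γ_{pq}(a)`, and they are 1-regular: a vertex `x` outside the fibre
over `k` is adjacent exactly to `x - s`, for the unique `s ∈ S` reducing to `x - k`.

For any graph with such a spread, the glued graph `F` is the union of the copies of `Γ` and of
the cliques `K_k` formed by the fibres labelled `k`. An edge inside a copy of `Γ` has the same
common neighbours as in `Γ`, and an edge inside some `K_k` has exactly the rest of `K_k` as common
neighbours; each `K_k` is a 1-regular clique of size `t q`. As `S` is a multiplicative group,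
`|S ∩ (S + d)| = λ` for every `d ∈ S`, so both kinds of edges have `λ = t q - 2` common
neighbours.
-/

namespace SimpleGraph

section Spread

variable {ι V C : Type*}

/-- A spread of `Γ` into 1-regular cocliques, the coclique through `x` being the fibre of `c`
through `x`. -/
structure IsOneRegularSpread (Γ : SimpleGraph V) (c : V → C) : Prop where
  not_adj_of_eq : ∀ ⦃x y⦄, c x = c y → ¬Γ.Adj x y
  existsUnique_adj : ∀ x k, c x ≠ k → ∃! y, c y = k ∧ Γ.Adj x y

namespace IsOneRegularSpread

variable {Γ : SimpleGraph V} {c : V → C}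

lemma ne_of_adj (hS : IsOneRegularSpread Γ c) {x y : V} (h : Γ.Adj x y) : c x ≠ c y :=
  fun hxy => hS.not_adj_of_eq hxy h

lemma eq_of_adj_of_adj (hS : IsOneRegularSpread Γ c) {x y z : V} (hy : Γ.Adj x y)
    (hz : Γ.Adj x z) (hyz : c y = c z) : y = z :=
  (hS.existsUnique_adj x (c y) (hS.ne_of_adj hy)).unique ⟨rfl, hy⟩ ⟨hyz.symm, hz⟩

lemma exists_not_adj (hS : IsOneRegularSpread Γ c) (x : V) {k : C}
    (hfib : 1 < (c ⁻¹' {k}).ncard) : ∃ y, c y = k ∧ ¬Γ.Adj x y := by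
  obtain ⟨y, z, hy, hz, hyz⟩ :=
    (Set.one_lt_ncard_iff (Set.finite_of_ncard_pos (by omega))).mp hfib
  by_contra! h
  exact hyz (hS.eq_of_adj_of_adj (h y hy) (h z hz) (hy.trans hz.symm))

end IsOneRegularSpread

def spreadLabel (c : V → C) (π : ι → Equiv.Perm C) (v : ι × V) : C := (π v.1)⁻¹ (c v.2)

/-- The paper's `F_{(π_2,…,π_t)}(Γ, …, Γ)`, with copies indexed by `ι` and the cocliques
given as the fibres of `c`. -/
def spreadGlue (Γ : SimpleGraph V) (c : V → C) (π : ι → Equiv.Perm C) :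
    SimpleGraph (ι × V) where
  Adj u v :=
    u ≠ v ∧ ((u.1 = v.1 ∧ Γ.Adj u.2 v.2) ∨ spreadLabel c π u = spreadLabel c π v)
  symm := ⟨fun _ _ h => ⟨h.1.symm, h.2.imp (fun h' => ⟨h'.1.symm, h'.2.symm⟩) Eq.symm⟩⟩
  loopless := ⟨fun _ h => h.1 rfl⟩

variable {Γ : SimpleGraph V} {c : V → C} {π : ι → Equiv.Perm C}

lemma spreadGlue_adj {u v : ι × V} : (spreadGlue Γ c π).Adj u v ↔
    u ≠ v ∧ ((u.1 = v.1 ∧ Γ.Adj u.2 v.2) ∨ spreadLabel c π u = spreadLabel c π v) :=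
  Iff.rfl

lemma spreadLabel_mk_eq_mk_iff {i : ι} {x y : V} :
    spreadLabel c π (i, x) = spreadLabel c π (i, y) ↔ c x = c y :=
  (π i)⁻¹.injective.eq_iff

lemma isClique_spreadLabel_preimage (k : C) :
    (spreadGlue Γ c π).IsClique (spreadLabel c π ⁻¹' {k}) :=
  fun _ hu _ hv huv => ⟨huv, Or.inr (hu.trans hv.symm)⟩

lemma ncard_spreadLabel_preimage [Finite ι] [Finite V] {w : ℕ}
    (hw : ∀ k, (c ⁻¹' {k}).ncard = w) (k : C) :
    (spreadLabel c π ⁻¹' {k}).ncard = Nat.card ι * w := by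
  have := Fintype.ofFinite ι
  calc (spreadLabel c π ⁻¹' {k}).ncard = Nat.card (Σ i, {x // c x = π i k}) :=
        Nat.card_congr <|
          (Equiv.subtypeProdEquivSigmaSubtype fun i x => spreadLabel c π (i, x) = k).trans <|
            Equiv.sigmaCongrRight fun _ => Equiv.subtypeEquivRight fun _ => Equiv.Perm.inv_eq_iff_eq
    _ = ∑ i : ι, (c ⁻¹' {π i k}).ncard := Nat.card_sigma
    _ = Nat.card ι * w := by simp [hw]

lemma neighborSet_spreadGlue (i : ι) (x : V) :
    (spreadGlue Γ c π).neighborSet (i, x) =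
      Prod.mk i '' Γ.neighborSet x ∪
        (spreadLabel c π ⁻¹' {spreadLabel c π (i, x)} \ {(i, x)}) := by
  ext ⟨j, y⟩
  simp only [mem_neighborSet, spreadGlue_adj, Set.mem_union, Set.mem_image, Set.mem_sdiff,
    Set.mem_preimage, Set.mem_singleton_iff]
  constructor
  · rintro ⟨hne, ⟨rfl, hxy⟩ | hlabel⟩
    · exact Or.inl ⟨y, hxy, rfl⟩
    · exact Or.inr ⟨hlabel.symm, hne.symm⟩
  · rintro (⟨y, hxy, ⟨⟩⟩ | ⟨hlabel, hne⟩)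
    · exact ⟨fun h => hxy.ne (Prod.ext_iff.mp h).2, Or.inl ⟨rfl, hxy⟩⟩
    · exact ⟨Ne.symm hne, Or.inr hlabel.symm⟩

lemma ncard_neighborSet_spreadGlue [Finite ι] [Finite V] (hS : IsOneRegularSpread Γ c) {w : ℕ}
    (hw : ∀ k, (c ⁻¹' {k}).ncard = w) (i : ι) (x : V) :
    ((spreadGlue Γ c π).neighborSet (i, x)).ncard =
      (Γ.neighborSet x).ncard + (Nat.card ι * w - 1) := by
  have hdisj : Disjoint (Prod.mk i '' Γ.neighborSet x)
      (spreadLabel c π ⁻¹' {spreadLabel c π (i, x)} \ {(i, x)}) := by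
    rw [Set.disjoint_left]
    rintro _ ⟨y, hxy, rfl⟩ ⟨hlabel, -⟩
    exact hS.ne_of_adj hxy (spreadLabel_mk_eq_mk_iff.mp hlabel).symm
  rw [neighborSet_spreadGlue, Set.ncard_union_eq hdisj,
    Set.ncard_image_of_injective _ (Prod.mk_right_injective i),
    Set.ncard_sdiff_singleton_of_mem
      (show (i, x) ∈ spreadLabel c π ⁻¹' {spreadLabel c π (i, x)} from rfl),
    ncard_spreadLabel_preimage hw]

lemma commonNeighbors_spreadGlue_of_adj (hS : IsOneRegularSpread Γ c) (i : ι) {x y : V}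
    (hxy : Γ.Adj x y) :
    (spreadGlue Γ c π).commonNeighbors (i, x) (i, y) = Prod.mk i '' Γ.commonNeighbors x y := by
  ext ⟨j, z⟩
  simp only [mem_commonNeighbors, spreadGlue_adj, Set.mem_image, Prod.mk.injEq]
  constructor
  · rintro ⟨⟨hxz, hx⟩, ⟨hyz, hy⟩⟩
    rcases hx with ⟨rfl, hxz'⟩ | hlx
    · rcases hy with ⟨-, hyz'⟩ | hly
      · exact ⟨z, ⟨hxz', hyz'⟩, rfl, rfl⟩
      · cases hyz (by rw [hS.eq_of_adj_of_adj hxy hxz' (spreadLabel_mk_eq_mk_iff.mp hly)])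
    · rcases hy with ⟨rfl, hyz'⟩ | hly
      · cases hxz (by rw [hS.eq_of_adj_of_adj hxy.symm hyz' (spreadLabel_mk_eq_mk_iff.mp hlx)])
      · exact absurd (spreadLabel_mk_eq_mk_iff.mp (hlx.trans hly.symm)) (hS.ne_of_adj hxy)
  · rintro ⟨z, ⟨hxz, hyz⟩, rfl, rfl⟩
    exact ⟨⟨fun h => hxz.ne (Prod.ext_iff.mp h).2, Or.inl ⟨rfl, hxz⟩⟩,
      ⟨fun h => hyz.ne (Prod.ext_iff.mp h).2, Or.inl ⟨rfl, hyz⟩⟩⟩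

lemma commonNeighbors_spreadGlue_of_spreadLabel_eq (hS : IsOneRegularSpread Γ c)
    {u v : ι × V} (huv : u ≠ v) (h : spreadLabel c π u = spreadLabel c π v) :
    (spreadGlue Γ c π).commonNeighbors u v =
      spreadLabel c π ⁻¹' {spreadLabel c π u} \ {u, v} := by
  obtain ⟨i, x⟩ := u
  obtain ⟨j, y⟩ := v
  ext ⟨k, z⟩
  simp only [mem_commonNeighbors, spreadGlue_adj, Set.mem_sdiff, Set.mem_preimage,
    Set.mem_singleton_iff, Set.mem_insert_iff, not_or]
  constructor
  · rintro ⟨⟨hxz, hx⟩, ⟨hyz, hy⟩⟩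
    rcases hx with ⟨rfl, hxz'⟩ | hlx
    · rcases hy with ⟨rfl, hyz'⟩ | hly
      · cases huv (by rw [hS.eq_of_adj_of_adj hxz'.symm hyz'.symm (spreadLabel_mk_eq_mk_iff.mp h)])
      · exact absurd (spreadLabel_mk_eq_mk_iff.mp (h.trans hly)) (hS.ne_of_adj hxz')
    · rcases hy with ⟨rfl, hyz'⟩ | hly
      · exact absurd (spreadLabel_mk_eq_mk_iff.mp (h.symm.trans hlx)) (hS.ne_of_adj hyz')
      · exact ⟨hlx.symm, hxz.symm, hyz.symm⟩
  · rintro ⟨hlabel, hxz, hyz⟩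
    exact ⟨⟨Ne.symm hxz, Or.inr hlabel.symm⟩,
      ⟨Ne.symm hyz, Or.inr (h.symm.trans hlabel.symm)⟩⟩

lemma ncard_spreadGlue_adj_inter_spreadLabel_preimage (hS : IsOneRegularSpread Γ c)
    {v : ι × V} {k : C} (hv : spreadLabel c π v ≠ k) :
    {w ∈ spreadLabel c π ⁻¹' {k} | (spreadGlue Γ c π).Adj v w}.ncard = 1 := by
  obtain ⟨j, y⟩ := v
  obtain ⟨z, ⟨hz, hyz⟩, hunique⟩ :=
    hS.existsUnique_adj y (π j k) fun h => hv (Equiv.Perm.inv_eq_iff_eq.mpr h)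
  refine Set.ncard_eq_one.mpr ⟨(j, z), ?_⟩
  ext ⟨j', z'⟩
  simp only [Set.mem_ofPred_eq, Set.mem_preimage, Set.mem_singleton_iff, spreadGlue_adj]
  constructor
  · rintro ⟨hlabel, -, ⟨rfl, hyz'⟩ | hlabel'⟩
    · rw [hunique z' ⟨Equiv.Perm.inv_eq_iff_eq.mp hlabel, hyz'⟩]
    · exact absurd (hlabel'.trans hlabel) hv
  · rintro ⟨⟩
    exact ⟨Equiv.Perm.inv_eq_iff_eq.mpr hz, fun h => hyz.ne (Prod.ext_iff.mp h).2,
      Or.inl ⟨rfl, hyz⟩⟩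

lemma spreadGlue_ne_top [Nonempty ι] [Nontrivial C] (hS : IsOneRegularSpread Γ c)
    (hfib : ∀ k, 1 < (c ⁻¹' {k}).ncard) : spreadGlue Γ c π ≠ ⊤ := by
  obtain ⟨x, -⟩ := Set.nonempty_of_ncard_ne_zero (hfib (Classical.arbitrary C)).ne_bot
  obtain ⟨k, hk⟩ := exists_ne (c x)
  obtain ⟨y, hy, hxy⟩ := hS.exists_not_adj x (hfib k)
  have hne : c x ≠ c y := hy ▸ hk.symm
  intro htop
  have hadj : (spreadGlue Γ c π).Adj (Classical.arbitrary ι, x) (Classical.arbitrary ι, y) := by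
    rw [htop, top_adj]
    exact fun h => hne (congrArg (fun v => c v.2) h)
  rcases hadj.2 with ⟨-, h⟩ | h
  · exact hxy h
  · exact hne (spreadLabel_mk_eq_mk_iff.mp h)

theorem isNeumaier_spreadGlue [Finite ι] [Finite V] [Nontrivial C] (hS : IsOneRegularSpread Γ c)
    {k l w : ℕ} (hdeg : ∀ x, (Γ.neighborSet x).ncard = k)
    (hcommon : ∀ x y, Γ.Adj x y → (Γ.commonNeighbors x y).ncard = l)
    (hw : ∀ k, (c ⁻¹' {k}).ncard = w) (hw₁ : 1 < w) (hιw : Nat.card ι * w = l + 2) :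
    IsNeumaier (spreadGlue Γ c π) (Nat.card ι * Nat.card V) (k + l + 1) l 1 (l + 2) := by
  have : Nonempty ι :=
    (Nat.card_ne_zero.mp (left_ne_zero_of_mul (by omega : Nat.card ι * w ≠ 0))).1
  have hclique :=
    isClique_spreadLabel_preimage (Γ := Γ) (c := c) (π := π) (Classical.arbitrary C)
  have hsize := ncard_spreadLabel_preimage (π := π) hw (Classical.arbitrary C)
  refine ⟨⟨Nat.card_prod ι V, ?_, ?_, ?_⟩, spreadGlue_ne_top hS (fun k => hw k ▸ hw₁),
    one_pos, _, hclique, hsize.trans hιw,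
    fun v hv => ncard_spreadGlue_adj_inter_spreadLabel_preimage hS hv⟩
  · rintro ⟨i, x⟩
    rw [ncard_neighborSet_spreadGlue hS hw, hdeg, hιw]
    omega
  · obtain ⟨u, v, hu, hv, huv⟩ := (Set.one_lt_ncard_iff (Set.toFinite _)).mp
      (by omega : 1 < (spreadLabel c π ⁻¹' {Classical.arbitrary C}).ncard)
    exact ⟨u, v, hclique hu hv huv⟩
  · rintro ⟨i, x⟩ ⟨j, y⟩ ⟨huv, ⟨rfl, hxy⟩ | hlabel⟩
    · rw [commonNeighbors_spreadGlue_of_adj hS i hxy,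
        Set.ncard_image_of_injective _ (Prod.mk_right_injective i), hcommon x y hxy]
    · have hpair : {(i, x), (j, y)} ⊆ spreadLabel c π ⁻¹' {spreadLabel c π (i, x)} :=
        Set.insert_subset rfl (Set.singleton_subset_iff.mpr hlabel.symm)
      rw [commonNeighbors_spreadGlue_of_spreadLabel_eq hS huv hlabel, Set.ncard_sdiff hpair,
        Set.ncard_pair huv, ncard_spreadLabel_preimage hw, hιw]
      omega

end Spread

section Cayley

variable {G : Type*} [AddCommGroup G] {Γ : SimpleGraph G} {S : Set G}

lemma adj_iff_sub_mem_of_zero_notMem (hΓ : ∀ x y, Γ.Adj x y ↔ x ≠ y ∧ x - y ∈ S)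
    (h0 : (0 : G) ∉ S) {x y : G} : Γ.Adj x y ↔ x - y ∈ S := by
  refine (hΓ x y).trans ⟨And.right, fun h => ⟨?_, h⟩⟩
  rintro rfl
  exact h0 (sub_self x ▸ h)

lemma ncard_neighborSet_of_adj_iff (hΓ : ∀ x y, Γ.Adj x y ↔ x ≠ y ∧ x - y ∈ S)
    (h0 : (0 : G) ∉ S) (x : G) : (Γ.neighborSet x).ncard = S.ncard := by
  have : Γ.neighborSet x = (x - ·) '' S := by
    ext y
    simp only [mem_neighborSet, adj_iff_sub_mem_of_zero_notMem hΓ h0, Set.mem_image]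
    exact ⟨fun h => ⟨x - y, h, sub_sub_cancel x y⟩,
      by rintro ⟨s, hs, rfl⟩; rwa [sub_sub_cancel]⟩
  rw [this, Set.ncard_image_of_injective _ sub_right_injective]

lemma ncard_commonNeighbors_of_adj_iff (hΓ : ∀ x y, Γ.Adj x y ↔ x ≠ y ∧ x - y ∈ S)
    (h0 : (0 : G) ∉ S) (x y : G) :
    (Γ.commonNeighbors x y).ncard = (S ∩ (· + (x - y)) '' S).ncard := by
  have : Γ.commonNeighbors x y = (x - ·) '' (S ∩ (· + (x - y)) '' S) := by
    ext z
    simp only [mem_commonNeighbors, adj_iff_sub_mem_of_zero_notMem hΓ h0, Set.mem_image,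
      Set.mem_inter_iff]
    constructor
    · rintro ⟨hxz, hyz⟩
      exact ⟨x - z, ⟨hxz, y - z, hyz, by abel⟩, sub_sub_cancel x z⟩
    · rintro ⟨s, ⟨hs, t, ht, rfl⟩, rfl⟩
      refine ⟨by rwa [sub_sub_cancel], ?_⟩
      convert ht using 1
      abel
  rw [this, Set.ncard_image_of_injective _ sub_right_injective]

lemma isOneRegularSpread_of_bijOn {C F : Type*} [AddCommGroup C] [FunLike F G C]
    [AddMonoidHomClass F G C] (hΓ : ∀ x y, Γ.Adj x y ↔ x ≠ y ∧ x - y ∈ S) (r : F)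
    (hr : Set.BijOn r S {0}ᶜ) : Γ.IsOneRegularSpread r := by
  have h0 : (0 : G) ∉ S := fun h => hr.mapsTo h (map_zero r)
  have hadj {x y : G} := adj_iff_sub_mem_of_zero_notMem hΓ h0 (x := x) (y := y)
  refine ⟨fun x y hxy h => hr.mapsTo (hadj.mp h) ?_, fun x k hk => ?_⟩
  · rw [map_sub, hxy, sub_self]
    exact Set.mem_singleton 0
  obtain ⟨s, hs, hrs⟩ := hr.surjOn (show r x - k ∈ ({0}ᶜ : Set C) from sub_ne_zero.mpr hk)
  refine ⟨x - s, ⟨by rw [map_sub, hrs, sub_sub_cancel], hadj.mpr (by rwa [sub_sub_cancel])⟩,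
    ?_⟩
  rintro y ⟨rfl, hy⟩
  have : x - y = s := hr.injOn (hadj.mp hy) hs (by rw [map_sub, hrs])
  rw [← this, sub_sub_cancel]

end Cayley

end SimpleGraph

lemma ncard_inter_image_add_unit {R : Type*} [CommRing R] {S : Set R} {u : Rˣ}
    (hu : ∀ s, (u : R) * s ∈ S ↔ s ∈ S) :
    (S ∩ (· + (u : R)) '' S).ncard = (S ∩ (· + 1) '' S).ncard := by
  have : S ∩ (· + (u : R)) '' S = ((u : R) * ·) '' (S ∩ (· + 1) '' S) := by
    ext w
    simp only [Set.mem_inter_iff, Set.mem_image]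
    constructor
    · rintro ⟨hw, t, ht, rfl⟩
      refine ⟨↑u⁻¹ * (t + u), ⟨(hu _).mp ?_, ↑u⁻¹ * t, (hu _).mp ?_, ?_⟩,
        u.mul_inv_cancel_left _⟩
      · rwa [u.mul_inv_cancel_left]
      · rwa [u.mul_inv_cancel_left]
      · rw [mul_add, u.inv_mul]
    · rintro ⟨v, ⟨hv, t, ht, rfl⟩, rfl⟩
      exact ⟨(hu _).mpr hv, u * t, (hu _).mpr ht, by ring⟩
  rw [this, Set.ncard_image_of_injective _ u.isUnit.mul_right_injective]

lemma powSet_eq_image_zpowers (n : ℕ) (a : (ZMod n)ˣ) :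
    powSet n a = (↑) '' (Subgroup.zpowers a : Set (ZMod n)ˣ) := by
  ext x
  simp only [powSet, Set.mem_ofPred_eq, Set.mem_image, SetLike.mem_coe,
    ← mem_powers_iff_mem_zpowers, Submonoid.mem_powers_iff]
  constructor
  · rintro ⟨j, rfl⟩
    exact ⟨a ^ j, ⟨j, rfl⟩, Units.val_pow_eq_pow_val a j⟩
  · rintro ⟨_, ⟨j, rfl⟩, rfl⟩
    exact ⟨j, Units.val_pow_eq_pow_val a j⟩

lemma ncard_powSet_inter_image_add {n : ℕ} {a : (ZMod n)ˣ} {d : ZMod n}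
    (hd : d ∈ powSet n a) :
    (powSet n a ∩ (· + d) '' powSet n a).ncard =
      (powSet n a ∩ (· + 1) '' powSet n a).ncard := by
  rw [powSet_eq_image_zpowers] at hd ⊢
  obtain ⟨u, hu, rfl⟩ := hd
  refine ncard_inter_image_add_unit fun s => ⟨?_, ?_⟩
  · rintro ⟨v, hv, hvs⟩
    exact ⟨u⁻¹ * v, mul_mem (inv_mem hu) hv,
      by rw [Units.val_mul, hvs, u.inv_mul_cancel_left]⟩
  · rintro ⟨v, hv, rfl⟩
    exact ⟨u * v, mul_mem hu hv, Units.val_mul u v⟩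

theorem bijOn_castHom_powSet {n p : ℕ} [Fact p.Prime] (hpn : p ∣ n) (a : (ZMod n)ˣ)
    (hgen : ∀ x : (ZMod p)ˣ,
      x ∈ Subgroup.zpowers (Units.map (ZMod.castHom hpn (ZMod p)).toMonoidHom a))
    (ha : a ^ (p - 1) = 1) :
    Set.BijOn (ZMod.castHom hpn (ZMod p)) (powSet n a) {0}ᶜ := by
  set ψ := Units.map (ZMod.castHom hpn (ZMod p)).toMonoidHom
  have hcast (j : ℕ) :
      ZMod.castHom hpn (ZMod p) ((a : ZMod n) ^ j) = ((ψ a ^ j : (ZMod p)ˣ) : ZMod p) := by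
    rw [map_pow]
    rfl
  have hord : orderOf (ψ a) = orderOf a := by
    refine dvd_antisymm (orderOf_map_dvd ψ a) ?_
    rw [orderOf_eq_card_of_forall_mem_zpowers hgen, Nat.card_eq_fintype_card, ZMod.card_units]
    exact orderOf_dvd_of_pow_eq_one ha
  refine ⟨?_, ?_, ?_⟩
  · rintro _ ⟨j, rfl⟩
    rw [Set.mem_compl_singleton_iff, hcast]
    exact Units.ne_zero _
  · rintro _ ⟨j, rfl⟩ _ ⟨k, rfl⟩ h
    rw [hcast, hcast] at h
    have hjk := Units.val_injective h
    rw [pow_eq_pow_iff_modEq, hord, ← pow_eq_pow_iff_modEq] at hjk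
    rw [← Units.val_pow_eq_pow_val, hjk, Units.val_pow_eq_pow_val]
  · intro w hw
    lift w to (ZMod p)ˣ using isUnit_iff_ne_zero.mpr hw
    obtain ⟨j, hj⟩ := mem_powers_iff_mem_zpowers.mpr (hgen w)
    exact ⟨_, ⟨j, rfl⟩, by rw [hcast]; exact congrArg Units.val hj⟩

lemma AddMonoidHom.card_mul_ncard_preimage_singleton {G H : Type*} [AddGroup G] [Fintype G]
    [AddGroup H] [Fintype H] {f : G →+ H} (hf : Function.Surjective f) (h : H) :
    Nat.card H * (f ⁻¹' {h}).ncard = Nat.card G := by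
  classical
  have hfib (h' : H) : (f ⁻¹' {h'}).ncard = (f ⁻¹' {h}).ncard := by
    simpa [Set.ncard_eq_toFinset_card', Set.toFinset_ofPred] using
      AddMonoidHom.card_fiber_eq_of_mem_range f (hf h') (hf h)
  calc Nat.card H * (f ⁻¹' {h}).ncard = ∑ h' : H, (f ⁻¹' {h'}).ncard := by
        simp [hfib, Nat.card_eq_fintype_card]
    _ = ∑ h' : H, Nat.card {x // f x = h'} := rfl
    _ = Nat.card G := by rw [← Nat.card_sigma, Nat.card_congr (Equiv.sigmaFiberEquiv f)]

lemma ncard_castHom_preimage_singleton (m n : ℕ) [NeZero m] [NeZero n] (w : ZMod m) :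
    (ZMod.castHom (dvd_mul_right m n) (ZMod m) ⁻¹' {w}).ncard = n := by
  have := AddMonoidHom.card_mul_ncard_preimage_singleton
    (f := (ZMod.castHom (dvd_mul_right m n) (ZMod m)).toAddMonoidHom)
    (ZMod.castHom_surjective (dvd_mul_right m n)) w
  rw [Nat.card_zmod, Nat.card_zmod] at this
  exact Nat.eq_of_mul_eq_mul_left (Nat.pos_of_neZero m) this

theorem construction_pq_neumaier_general (p q : ℕ) (hp : p.Prime) (hq : q.Prime)
    (hpodd : Odd p) (a : (ZMod (p * q))ˣ)
    (hgen : ∀ x : (ZMod p)ˣ, x ∈ Subgroup.zpowers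
      (Units.map (ZMod.castHom (dvd_mul_right p q) (ZMod p)).toMonoidHom a))
    (hneg : (a : ZMod (p * q)) ^ ((p - 1) / 2) = -1)
    (lam : ℕ)
    (hlam : lam = (powSet (p * q) a ∩ ((· + 1) '' powSet (p * q) a)).ncard)
    (t : ℕ) (htq : q * t = lam + 2)
    (Γ : SimpleGraph (ZMod (p * q)))
    (hΓ : ∀ x y : ZMod (p * q), Γ.Adj x y ↔ x ≠ y ∧ x - y ∈ powSet (p * q) a)
    (π : Fin t → Equiv.Perm (ZMod p))
    (F : SimpleGraph (Fin t × ZMod (p * q)))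
    (hF : ∀ x y : Fin t × ZMod (p * q), F.Adj x y ↔ (x ≠ y ∧
      ((x.1 = y.1 ∧ Γ.Adj x.2 y.2) ∨
        (π x.1)⁻¹ (ZMod.castHom (dvd_mul_right p q) (ZMod p) x.2) =
          (π y.1)⁻¹ (ZMod.castHom (dvd_mul_right p q) (ZMod p) y.2)))) :
    IsNeumaier F (t * (p * q)) (p + lam) lam 1 (lam + 2) := by
  have := Fact.mk hp
  have := Fact.mk hq
  have ha : a ^ (p - 1) = 1 := by
    have h2 : 2 * ((p - 1) / 2) = p - 1 :=
      Nat.two_mul_div_two_of_even (Nat.Odd.sub_odd hpodd odd_one)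
    ext
    rw [Units.val_pow_eq_pow_val, ← h2, pow_mul', hneg, neg_one_sq, Units.val_one]
  have hbij := bijOn_castHom_powSet (dvd_mul_right p q) a hgen ha
  have h0 : (0 : ZMod (p * q)) ∉ powSet (p * q) a := fun h => hbij.mapsTo h (map_zero _)
  obtain rfl : F = Γ.spreadGlue (ZMod.castHom (dvd_mul_right p q) (ZMod p)) π :=
    SimpleGraph.ext (funext₂ fun x y => propext (hF x y))
  have hcommon (x y) (hxy : Γ.Adj x y) : (Γ.commonNeighbors x y).ncard = lam := by
    rw [SimpleGraph.ncard_commonNeighbors_of_adj_iff hΓ h0,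
      ncard_powSet_inter_image_add ((hΓ x y).mp hxy).2, hlam]
  have key := SimpleGraph.isNeumaier_spreadGlue (π := π)
    (SimpleGraph.isOneRegularSpread_of_bijOn hΓ _ hbij)
    (SimpleGraph.ncard_neighborSet_of_adj_iff hΓ h0) hcommon
    (ncard_castHom_preimage_singleton p q) hq.one_lt (by rw [Nat.card_fin, mul_comm, htq])
  rw [hbij.ncard_eq, Set.ncard_compl, Set.ncard_singleton, Nat.card_fin, Nat.card_zmod,
    Nat.card_zmod] at key
  rwa [add_right_comm, Nat.sub_add_cancel hp.one_le] at key

/-- Let `p ≠ q` be odd primes and `a ∈ (ℤ/pqℤ)*` with `a mod p` a generator of `(ℤ/pℤ)*`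
and `a^((p-1)/2) ≡ -1 (mod pq)`.  Put `S = S_{pq}(a)` and `λ = |S ∩ (S+1)|`, and suppose
`λ ≡ -2 (mod q)`, say `λ + 2 = q t`.  Take `t` disjoint copies of the Cayley graph
`Γ_{pq}(a)`, each with the spread of `1`-regular cocliques given by the cosets of the
subgroup generated by `p` (i.e. the fibres of reduction mod `p`), and permutations
`π₁ = id, π₂, …, π_t` of the `p` cocliques.  Then the resulting graph
`F_{(π₂,…,π_t)}` — distinct vertices `(i, x)` and `(j, y)` adjacent iff (`i = j` and
`x ∼ y` in `Γ_{pq}(a)`) or `π_i⁻¹(x mod p) = π_j⁻¹(y mod p)` — is a Neumaier graph with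
parameters `(t p q, p + λ, λ; 1, λ + 2)`. -/
theorem construction_pq_neumaier (p q : ℕ) (hp : p.Prime) (hq : q.Prime)
    (hpodd : Odd p) (hqodd : Odd q) (hpq : p ≠ q) (a : (ZMod (p * q))ˣ)
    (hgen : ∀ x : (ZMod p)ˣ, x ∈ Subgroup.zpowers
      (Units.map (ZMod.castHom (dvd_mul_right p q) (ZMod p)).toMonoidHom a))
    (hneg : (a : ZMod (p * q)) ^ ((p - 1) / 2) = -1)
    (lam : ℕ)
    (hlam : lam = (powSet (p * q) a ∩ ((· + 1) '' powSet (p * q) a)).ncard)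
    (hmod : (lam : ℤ) ≡ -2 [ZMOD q])
    (t : ℕ) (htq : q * t = lam + 2) (ht : 0 < t)
    (Γ : SimpleGraph (ZMod (p * q)))
    (hΓ : ∀ x y : ZMod (p * q), Γ.Adj x y ↔ x ≠ y ∧ x - y ∈ powSet (p * q) a)
    (π : Fin t → Equiv.Perm (ZMod p)) (hπ : π ⟨0, ht⟩ = 1)
    (F : SimpleGraph (Fin t × ZMod (p * q)))
    (hF : ∀ x y : Fin t × ZMod (p * q), F.Adj x y ↔ (x ≠ y ∧
      ((x.1 = y.1 ∧ Γ.Adj x.2 y.2) ∨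
        (π x.1)⁻¹ (ZMod.castHom (dvd_mul_right p q) (ZMod p) x.2) =
          (π y.1)⁻¹ (ZMod.castHom (dvd_mul_right p q) (ZMod p) y.2)))) :
    IsNeumaier F (t * (p * q)) (p + lam) lam 1 (lam + 2) :=
  construction_pq_neumaier_general p q hp hq hpodd a hgen hneg lam hlam t htq Γ hΓ π F hF
end

section
/- Let p be an odd prime and q an odd positive integer, and let a ∈ (ℤ/pqℤ)* be such that the reduction of a modulo p is a generator of (ℤ/pℤ)* and a^{(p−1)/2} ≡ −1 (mod pq). Suppose the prime factorization of q contains a prime ℓ ≥ 5 that is a Fermat prime (i.e., ℓ = 2^{2^n} + 1 for some n ≥ 0) and also a prime ℓ' with ℓ' ≡ 3 (mod 4). Then |S_{pq}(a) ∩ (S_{pq}(a)+1)| = 0. -/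
/-- Let `p` be an odd prime, `q` an odd positive integer and `a ∈ (ℤ/pqℤ)*` with
`a mod p` a generator of `(ℤ/pℤ)*` and `a^((p-1)/2) ≡ -1 (mod pq)`.  If the prime
factorization of `q` contains a Fermat prime `ℓ ≥ 5` (i.e. `ℓ = 2^(2^n) + 1`) and also a
prime `ℓ' ≡ 3 (mod 4)`, then `|S_{pq}(a) ∩ (S_{pq}(a)+1)| = 0`. -/
theorem card_inter_eq_zero_of_fermat (p q : ℕ) (hp : p.Prime) (hpodd : Odd p)
    (hqodd : Odd q) (hq : 0 < q) (a : (ZMod (p * q))ˣ)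
    (hgen : ∀ x : (ZMod p)ˣ, x ∈ Subgroup.zpowers
      (Units.map (ZMod.castHom (dvd_mul_right p q) (ZMod p)).toMonoidHom a))
    (hneg : (a : ZMod (p * q)) ^ ((p - 1) / 2) = -1)
    (hfermat : ∃ ℓ : ℕ, ℓ.Prime ∧ ℓ ∣ q ∧ 5 ≤ ℓ ∧ ∃ n : ℕ, ℓ = 2 ^ (2 ^ n) + 1)
    (hthree : ∃ ℓ' : ℕ, ℓ'.Prime ∧ ℓ' ∣ q ∧ ℓ' % 4 = 3) :
    (powSet (p * q) a ∩ ((· + 1) '' powSet (p * q) a)).ncard = 0 := by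
  obtain ⟨ℓ, hℓp, hℓq, hℓ5, n, hℓform⟩ := hfermat
  obtain ⟨ℓ', hℓ'p, hℓ'q, hℓ'3⟩ := hthree
  haveI : Fact ℓ.Prime := ⟨hℓp⟩
  haveI : Fact ℓ'.Prime := ⟨hℓ'p⟩
  have hdvd : ℓ ∣ p * q := hℓq.trans (dvd_mul_left q p)
  have hdvd' : ℓ' ∣ p * q := hℓ'q.trans (dvd_mul_left q p)
  set f := ZMod.castHom hdvd (ZMod ℓ) with hf
  set g := ZMod.castHom hdvd' (ZMod ℓ') with hg
  -- step 1: (p-1)/2 is odd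
  have hcneg : (g ((a : ZMod (p*q)))) ^ ((p-1)/2) = -1 := by
    rw [← map_pow, hneg, map_neg, map_one]
  have hsodd : Odd ((p-1)/2) := by
    rw [Nat.odd_iff]
    by_contra h
    have h2 : ∃ m, (p-1)/2 = 2 * m := ⟨(p-1)/2/2, by omega⟩
    obtain ⟨m, hm⟩ := h2
    have hsq : IsSquare (-1 : ZMod ℓ') := by
      refine ⟨(g ((a : ZMod (p*q))))^m, ?_⟩
      rw [← hcneg, hm, pow_mul, sq]
      ring
    rw [ZMod.exists_sq_eq_neg_one_iff] at hsq
    exact hsq hℓ'3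
  -- step 2: a ≡ -1 mod ℓ
  set b := f ((a : ZMod (p*q))) with hb
  have hbneg : b ^ ((p-1)/2) = -1 := by
    rw [hb, ← map_pow, hneg, map_neg, map_one]
  have hp1 : p - 1 = (p-1)/2 * 2 := by
    have h2 := hp.two_le
    have h3 := Nat.odd_iff.mp hpodd
    omega
  have hbp : b ^ (p - 1) = 1 := by
    rw [hp1, pow_mul, hbneg]; ring
  have hbne : b ≠ 0 := ((Units.isUnit a).map f).ne_zero
  have hbℓ : b ^ (ℓ - 1) = 1 := ZMod.pow_card_sub_one_eq_one hbne
  have hsmall : ∀ m : ℕ, 0 < m → m < 5 → ((m : ZMod ℓ)) ≠ 0 := by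
    intro m hm1 hm2 hcast
    have := (CharP.cast_eq_zero_iff (ZMod ℓ) ℓ m).mp hcast
    have := Nat.le_of_dvd hm1 this
    omega
  have hord2 : orderOf b ∣ 2 := by
    have h1 : orderOf b ∣ (p-1)/2 * 2 := by
      rw [← hp1]; exact orderOf_dvd_of_pow_eq_one hbp
    have h2 : orderOf b ∣ 2 ^ (2^n) := by
      have he : ℓ - 1 = 2 ^ (2^n) := by omega
      rw [← he]; exact orderOf_dvd_of_pow_eq_one hbℓ
    obtain ⟨t, _, hteq⟩ := (Nat.dvd_prime_pow Nat.prime_two).mp h2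
    rw [hteq] at h1 ⊢
    have hcop : Nat.Coprime (2^t) ((p-1)/2) :=
      Nat.Coprime.pow_left t (Nat.coprime_two_left.mpr hsodd)
    exact hcop.dvd_of_dvd_mul_left h1
  have hb2 : b ^ 2 = 1 := orderOf_dvd_iff_pow_eq_one.mp hord2
  have hbval : b = -1 := by
    have hbb : b * b = 1 := by rw [← sq]; exact hb2
    rcases mul_self_eq_one_iff.mp hbb with h1 | h1
    · exfalso
      rw [h1, one_pow] at hbneg
      exact hsmall 2 (by norm_num) (by norm_num)
        (by push_cast; linear_combination hbneg)
    · exact h1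
  -- step 3: the intersection is empty
  have hempty : (powSet (p * q) a ∩ ((· + 1) '' powSet (p * q) a)) = (∅ : Set (ZMod (p*q))) := by
    rw [Set.eq_empty_iff_forall_notMem]
    rintro x ⟨⟨j, hj⟩, y, ⟨k, hk⟩, hxy⟩
    have hmain : ((a : ZMod (p*q))) ^ j = ((a : ZMod (p*q))) ^ k + 1 := by
      rw [← hj, ← hxy, hk]
    have heq : b ^ j = b ^ k + 1 := by
      have := congrArg f hmain
      rwa [map_pow, map_add, map_pow, map_one] at this
    rw [hbval] at heq
    rcases Nat.even_or_odd j with hje | hje <;> rcases Nat.even_or_odd k with hke | hke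
    · rw [hje.neg_one_pow, hke.neg_one_pow] at heq
      exact hsmall 1 (by norm_num) (by norm_num) (by push_cast; linear_combination -heq)
    · rw [hje.neg_one_pow, hke.neg_one_pow] at heq
      exact hsmall 1 (by norm_num) (by norm_num) (by push_cast; linear_combination heq)
    · rw [hje.neg_one_pow, hke.neg_one_pow] at heq
      exact hsmall 3 (by norm_num) (by norm_num) (by push_cast; linear_combination -heq)
    · rw [hje.neg_one_pow, hke.neg_one_pow] at heq
      exact hsmall 1 (by norm_num) (by norm_num) (by push_cast; linear_combination -heq)
  rw [hempty]
  exact Set.ncard_empty _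
end
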